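/- arXiv:2511.18118 — 7 statements merged into one kernel-verified Lean document; each statement's English description precedes it below -/
import Mathlib

section
/- For every ε > 0, every ν ∈ ℂ with Re(ν) > 1 and every x ∈ ℝ: the Lebesgue integral ∫_ℝ e^{i x ξ} · (ε + i ξ)^{−ν} dξ equals (2π/Γ(ν)) · x^{ν−1} · e^{−ε x} if x > 0, and equals 0 if x < 0. Here x^{ν−1} is the principal complex power of the positive real x, (ε + iξ)^{−ν} is the principal complex power, and the integrand is absolutely integrable since Re(ν) > 1. -/
open MeasureTheory Set Filter Topology Complex
open scoped Real FourierTransform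

/-!
Let `f(t) = t^(ν-1) e^(-b t)` for `t > 0` and `f(t) = 0` for `t ≤ 0`. Its Fourier transform is the
Gamma integral `∫₀^∞ t^(ν-1) e^(-(b + 2πiξ) t) dt = Γ(ν) (b + 2πiξ)^(-ν)`: for real `b > 0` this is
a substitution, and both sides are holomorphic in `b` on the right half-plane, so the identity
theorem extends it. When `Re ν > 1` this transform is integrable, of size `|ξ|^(-Re ν)`, and `f` is
continuous away from `0`, so Fourier inversion recovers `f(x)` for `x ≠ 0`; rescaling `ξ` by `2π`
turns the inversion integral into `∫ e^(ixξ) (b + iξ)^(-ν) dξ`.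
-/

section

variable {ν b : ℂ}

lemma continuousOn_cpow_mul_exp_neg_mul (ν b : ℂ) :
    ContinuousOn (fun t : ℝ => (t : ℂ) ^ (ν - 1) * cexp (-(b * t))) (Ioi 0) := by
  refine ContinuousOn.mul (fun t ht => ?_) (by fun_prop)
  exact ((continuousAt_cpow_const (ofReal_mem_slitPlane.mpr ht)).comp
    continuous_ofReal.continuousAt).continuousWithinAt

lemma norm_cpow_mul_exp_neg_mul {t : ℝ} (ht : 0 < t) :
    ‖(t : ℂ) ^ (ν - 1) * cexp (-(b * t))‖ = t ^ (ν.re - 1) * Real.exp (-b.re * t) := by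
  simp [norm_cpow_eq_rpow_re_of_pos ht, norm_exp]

lemma integrableOn_cpow_mul_exp_neg_mul_Ioi (hν : 0 < ν.re) (hb : 0 < b.re) :
    IntegrableOn (fun t : ℝ => (t : ℂ) ^ (ν - 1) * cexp (-(b * t))) (Ioi 0) := by
  have hmeas := (continuousOn_cpow_mul_exp_neg_mul ν b).aestronglyMeasurable (μ := volume)
    measurableSet_Ioi
  refine (integrable_norm_iff hmeas).mp <|
    (integrableOn_rpow_mul_exp_neg_mul_rpow (p := 1) (s := ν.re - 1) (b := b.re) (by linarith)
      one_pos hb).congr_fun (fun t ht => ?_) measurableSet_Ioi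
  simp only [norm_cpow_mul_exp_neg_mul (mem_Ioi.mp ht), Real.rpow_one]

lemma differentiableOn_integral_cpow_mul_exp_neg_mul (hν : 0 < ν.re) :
    DifferentiableOn ℂ (fun b : ℂ => ∫ t in Ioi (0 : ℝ), (t : ℂ) ^ (ν - 1) * cexp (-(b * t)))
      {b | 0 < b.re} := by
  intro b (hb : 0 < b.re)
  have hs : {w : ℂ | b.re / 2 < w.re} ∈ 𝓝 b :=
    (isOpen_lt continuous_const continuous_re).mem_nhds (half_lt_self hb)
  have hderiv := hasDerivAt_integral_of_dominated_loc_of_deriv_le (μ := volume.restrict (Ioi 0))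
    (F' := fun w t => (t : ℂ) ^ (ν - 1) * (cexp (-(w * t)) * -t))
    (bound := fun t => t ^ ν.re * Real.exp (-(b.re / 2) * t)) hs
    (Eventually.of_forall fun w =>
      (continuousOn_cpow_mul_exp_neg_mul ν w).aestronglyMeasurable measurableSet_Ioi)
    (integrableOn_cpow_mul_exp_neg_mul_Ioi hν hb)
    (((continuousOn_cpow_mul_exp_neg_mul ν b).mul continuous_ofReal.neg.continuousOn
      ).aestronglyMeasurable measurableSet_Ioi |>.congr (.of_forall fun t => by simp [mul_assoc]))
    ?_ ?_ ?_
  · exact hderiv.2.differentiableAt.differentiableWithinAt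
  · filter_upwards [self_mem_ae_restrict measurableSet_Ioi] with t (ht : 0 < t) w (hw : _ < _)
    rw [← mul_assoc, norm_mul, norm_cpow_mul_exp_neg_mul ht, norm_neg, norm_real,
      Real.norm_of_nonneg ht.le, mul_right_comm, ← Real.rpow_add_one ht.ne', sub_add_cancel]
    gcongr
  · simpa only [Real.rpow_one, IntegrableOn] using integrableOn_rpow_mul_exp_neg_mul_rpow (p := 1)
      (s := ν.re) (b := b.re / 2) (by linarith) one_pos (half_pos hb)
  · filter_upwards with t w _
    have hlin : HasDerivAt (fun w : ℂ => -(w * t)) (-t) w := (hasDerivAt_mul_const _).neg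
    exact hlin.cexp.const_mul _

theorem integral_cpow_mul_exp_neg_mul_Ioi_of_re_pos (hν : 0 < ν.re) (hb : 0 < b.re) :
    ∫ t in Ioi (0 : ℝ), (t : ℂ) ^ (ν - 1) * cexp (-(b * t)) = b ^ (-ν) * Gamma ν := by
  have hreal : ∀ᶠ r : ℝ in 𝓝[≠] 1,
      ∫ t in Ioi (0 : ℝ), (t : ℂ) ^ (ν - 1) * cexp (-((r : ℂ) * t)) = (r : ℂ) ^ (-ν) * Gamma ν := by
    filter_upwards [nhdsWithin_le_nhds (lt_mem_nhds one_pos)] with r hr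
    rw [integral_cpow_mul_exp_neg_mul_Ioi hν hr, one_div,
      inv_cpow _ _ (by rw [arg_ofReal_of_nonneg hr.le]; exact Real.pi_ne_zero.symm), cpow_neg]
  have hofReal : Tendsto ((↑) : ℝ → ℂ) (𝓝[≠] 1) (𝓝[≠] 1) :=
    continuous_ofReal.continuousWithinAt.tendsto_nhdsWithin fun r hr => by simpa using hr
  have hhalf : IsOpen {b : ℂ | 0 < b.re} := isOpen_lt continuous_const continuous_re
  refine AnalyticOnNhd.eqOn_of_preconnected_of_frequently_eq
    (g := fun b : ℂ => b ^ (-ν) * Gamma ν)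
    ((differentiableOn_integral_cpow_mul_exp_neg_mul hν).analyticOnNhd hhalf)
    (DifferentiableOn.analyticOnNhd (fun z hz => ?_) hhalf)
    (convex_halfSpace_re_gt 0).isPreconnected (by simp : (1 : ℂ) ∈ {b : ℂ | 0 < b.re})
    (hofReal.frequently hreal.frequently) hb
  exact ((differentiableAt_id.cpow_const (Or.inl hz)).mul_const _).differentiableWithinAt

lemma norm_cpow_le_rpow_mul_exp (z w : ℂ) : ‖z ^ w‖ ≤ ‖z‖ ^ w.re * Real.exp (π * |w.im|) := by
  refine (norm_cpow_le z w).trans ?_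
  rw [div_eq_mul_inv, ← Real.exp_neg]
  gcongr
  calc -(arg z * w.im) ≤ |arg z| * |w.im| := (neg_le_abs _).trans (abs_mul _ _).le
    _ ≤ π * |w.im| := by gcongr; exact abs_arg_le_pi z

lemma integrable_cpow_neg_ofReal_add_mul_I {ε : ℝ} (hε : 0 < ε) (hν : 1 < ν.re) :
    Integrable fun η : ℝ => ((ε : ℂ) + η * I) ^ (-ν) := by
  obtain ⟨c, hc, hcε, hc1⟩ : ∃ c : ℝ, 0 < c ∧ 2 * c ≤ ε ∧ 2 * c ≤ 1 :=
    ⟨min ε 1 / 2, by positivity, by linarith [min_le_left ε 1], by linarith [min_le_right ε 1]⟩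
  have hlower (η : ℝ) : c * (1 + ‖η‖) ≤ ‖(ε : ℂ) + η * I‖ := by
    have hre := abs_re_le_norm ((ε : ℂ) + η * I)
    have him := abs_im_le_norm ((ε : ℂ) + η * I)
    simp only [add_re, ofReal_re, mul_re, ofReal_im, I_re, I_im, add_im, mul_im, mul_zero,
      sub_zero, mul_one, add_zero, zero_add] at hre him
    rw [Real.norm_eq_abs]
    nlinarith [abs_nonneg η, le_abs_self ε]
  refine ((integrable_one_add_norm (by simpa using hν)).const_mul
    (c ^ (-ν.re) * Real.exp (π * |ν.im|))).mono'
    ((Continuous.cpow (by fun_prop) continuous_const fun η => Or.inl (by simpa using hε)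
      ).aestronglyMeasurable) (.of_forall fun η => ?_)
  calc ‖((ε : ℂ) + η * I) ^ (-ν)‖
      ≤ ‖(ε : ℂ) + η * I‖ ^ (-ν.re) * Real.exp (π * |ν.im|) := by
        simpa using norm_cpow_le_rpow_mul_exp ((ε : ℂ) + η * I) (-ν)
    _ ≤ (c * (1 + ‖η‖)) ^ (-ν.re) * Real.exp (π * |ν.im|) := by
        refine mul_le_mul_of_nonneg_right
          (Real.rpow_le_rpow_of_nonpos ?_ (hlower η) (by linarith)) (Real.exp_pos _).le
        positivity
    _ = c ^ (-ν.re) * Real.exp (π * |ν.im|) * (1 + ‖η‖) ^ (-ν.re) := by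
        rw [Real.mul_rpow hc.le (by positivity)]
        ring

lemma integrable_cpow_neg_add_mul_I (hν : 1 < ν.re) (hb : 0 < b.re) :
    Integrable fun ξ : ℝ => (b + ξ * I) ^ (-ν) := by
  refine ((integrable_cpow_neg_ofReal_add_mul_I hb hν).comp_add_right b.im).congr
    (.of_forall fun ξ => ?_)
  simp only
  congr 1
  apply Complex.ext <;> simp [add_comm]

noncomputable def gammaKernel (ν b : ℂ) : ℝ → ℂ :=
  (Ioi 0).indicator fun t => (t : ℂ) ^ (ν - 1) * cexp (-(b * t))

lemma integrable_gammaKernel (hν : 0 < ν.re) (hb : 0 < b.re) : Integrable (gammaKernel ν b) :=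
  (integrable_indicator_iff measurableSet_Ioi).mpr (integrableOn_cpow_mul_exp_neg_mul_Ioi hν hb)

lemma continuousAt_gammaKernel {x : ℝ} (hx : x ≠ 0) : ContinuousAt (gammaKernel ν b) x :=
  (continuousOn_cpow_mul_exp_neg_mul ν b).mono interior_subset |>.continuousAt_indicator
    (by simpa using hx)

lemma fourier_gammaKernel (hν : 0 < ν.re) (hb : 0 < b.re) (ξ : ℝ) :
    𝓕 (gammaKernel ν b) ξ = Gamma ν * (b + (2 * π * ξ : ℝ) * I) ^ (-ν) := by
  have hmod (t : ℝ) : cexp (↑(-2 * π * t * ξ) * I) • gammaKernel ν b t =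
      (Ioi (0 : ℝ)).indicator
        (fun t : ℝ => (t : ℂ) ^ (ν - 1) * cexp (-((b + (2 * π * ξ : ℝ) * I) * t))) t := by
    by_cases ht : t ∈ Ioi 0
    · rw [gammaKernel, indicator_of_mem ht, indicator_of_mem ht, smul_eq_mul, mul_left_comm,
        ← Complex.exp_add]
      push_cast
      ring_nf
    · rw [gammaKernel, indicator_of_notMem ht, indicator_of_notMem ht, smul_zero]
  rw [Real.fourier_real_eq_integral_exp_smul, funext hmod, integral_indicator measurableSet_Ioi,
    integral_cpow_mul_exp_neg_mul_Ioi_of_re_pos hν (by simpa using hb), mul_comm]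

lemma integrable_fourier_gammaKernel (hν : 1 < ν.re) (hb : 0 < b.re) :
    Integrable (𝓕 (gammaKernel ν b)) := by
  rw [funext (fourier_gammaKernel (by linarith) hb)]
  exact ((integrable_cpow_neg_add_mul_I hν hb).comp_mul_left' Real.two_pi_pos.ne').const_mul _

theorem integral_cexp_mul_cpow_neg_eq_gammaKernel (hν : 1 < ν.re) (hb : 0 < b.re) {x : ℝ}
    (hx : x ≠ 0) :
    ∫ ξ : ℝ, cexp (I * x * ξ) * (b + I * ξ) ^ (-ν) = 2 * π / Gamma ν * gammaKernel ν b x := by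
  set g := fun ξ : ℝ => cexp (I * x * ξ) * (b + I * ξ) ^ (-ν)
  have hscale : ∫ ξ : ℝ, g (2 * π * ξ) = (2 * π : ℂ)⁻¹ * ∫ ξ : ℝ, g ξ := by
    rw [Measure.integral_comp_mul_left, abs_of_pos (inv_pos.mpr Real.two_pi_pos), real_smul]
    push_cast
    rfl
  have hinv : gammaKernel ν b x = Gamma ν * ∫ ξ : ℝ, g (2 * π * ξ) := by
    rw [← (integrable_gammaKernel (by linarith) hb).fourierInv_fourier_eq
      (integrable_fourier_gammaKernel hν hb) (continuousAt_gammaKernel hx),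
      Real.fourierInv_eq', ← integral_const_mul]
    congr 1 with ξ
    rw [fourier_gammaKernel (by linarith) hb, smul_eq_mul, Real.inner_apply]
    simp only [g]
    push_cast
    ring_nf
  rw [hinv, hscale]
  field_simp [Gamma_ne_zero_of_re_pos (by linarith : 0 < ν.re), Real.pi_ne_zero]

end

/-- For every `ε > 0`, every `ν ∈ ℂ` with `Re ν > 1` and every `x ∈ ℝ`:
`∫_ℝ e^{ixξ} (ε+iξ)^{-ν} dξ = (2π/Γ(ν)) x^{ν-1} e^{-εx}` if `x > 0`, and `= 0` if `x < 0`,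
with principal complex powers. -/
theorem stmt_1 (ε : ℝ) (hε : 0 < ε) (ν : ℂ) (hν : 1 < ν.re) (x : ℝ) :
    (0 < x →
      (∫ ξ : ℝ, Complex.exp (Complex.I * (x : ℂ) * (ξ : ℂ)) *
          ((ε : ℂ) + Complex.I * (ξ : ℂ)) ^ (-ν)) =
        (2 * (Real.pi : ℂ) / Complex.Gamma ν) * (x : ℂ) ^ (ν - 1) *
          (Real.exp (-(ε * x)) : ℂ)) ∧
    (x < 0 →
      (∫ ξ : ℝ, Complex.exp (Complex.I * (x : ℂ) * (ξ : ℂ)) *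
          ((ε : ℂ) + Complex.I * (ξ : ℂ)) ^ (-ν)) = 0) := by
  have hinversion (hx : x ≠ 0) :=
    integral_cexp_mul_cpow_neg_eq_gammaKernel (b := ε) hν (by simpa using hε) hx
  refine ⟨fun hx => ?_, fun hx => ?_⟩
  · rw [hinversion hx.ne', gammaKernel, indicator_of_mem (mem_Ioi.mpr hx)]
    push_cast
    ring_nf
  · rw [hinversion hx.ne, gammaKernel, indicator_of_notMem (by simpa using hx.le), mul_zero]
end

section
/- For every n ∈ ℕ, every ε > 0 and every t ∈ ℝ, one has K_n^ε(t) = ((−1)^n/π) · D^n_a (a/(a²+t²)) |_{a=ε}, i.e. (Γ(n+1)/(2π)) · ((ε+it)^{−(n+1)} + (ε−it)^{−(n+1)}) = ((−1)^n/π) · (iteratedDeriv n f) (ε), where f : ℝ → ℝ is the function f(a) = a/(a²+t²) (which is smooth on a neighbourhood of ε, since ε > 0). -/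
/-!
For real `a` one has the partial fraction decomposition
`a / (a² + t²) = ((a + it)⁻¹ + (a - it)⁻¹) / 2`. The right-hand side is the restriction to `ℝ` of
a holomorphic function, so its real derivatives are its complex ones, and the `n`-th derivative of
`(z + c)⁻¹` is `(-1)ⁿ n! (z + c)^(-n-1)`. Since `Γ(n + 1) = n!` and the complex powers in `K` have
integer exponent, both sides agree.
-/

open MeasureTheory

noncomputable def K (w : ℂ) (ε : ℝ) (t : ℝ) : ℂ :=
  Complex.Gamma (1 + w) / (2 * (Real.pi : ℂ)) *
    (((ε : ℂ) + Complex.I * (t : ℂ)) ^ (-(w + 1)) +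
      ((ε : ℂ) - Complex.I * (t : ℂ)) ^ (-(w + 1)))

open Complex Filter Topology Nat

theorem Complex.deriv_ofReal_comp (f : ℝ → ℝ) (x : ℝ) :
    deriv (fun a => (f a : ℂ)) x = deriv f x := by
  by_cases hf : DifferentiableAt ℝ f x
  · exact hf.hasDerivAt.ofReal_comp.deriv
  · have hf' : ¬DifferentiableAt ℝ (fun a => (f a : ℂ)) x := fun h =>
      hf (by simpa [Function.comp_def] using reCLM.differentiableAt.comp x h)
    rw [deriv_zero_of_not_differentiableAt hf, deriv_zero_of_not_differentiableAt hf', ofReal_zero]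

theorem Complex.iteratedDeriv_ofReal_comp (n : ℕ) (f : ℝ → ℝ) (x : ℝ) :
    iteratedDeriv n (fun a => (f a : ℂ)) x = iteratedDeriv n f x := by
  induction n generalizing x with
  | zero => simp
  | succ n ih => simp only [iteratedDeriv_succ, funext ih, deriv_ofReal_comp]

theorem Complex.iteratedDeriv_comp_ofReal {g : ℂ → ℂ} {U : Set ℂ}
    (hg : DifferentiableOn ℂ g U) (hU : IsOpen U) (n : ℕ) {x : ℝ} (hx : (x : ℂ) ∈ U) :
    iteratedDeriv n (fun a : ℝ => g a) x = iteratedDeriv n g x := by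
  induction n generalizing g with
  | zero => simp
  | succ n ih =>
    have hderiv : deriv (fun a : ℝ => g a) =ᶠ[𝓝 x] fun a : ℝ => deriv g a := by
      filter_upwards [(hU.preimage continuous_ofReal).mem_nhds hx] with a ha
      exact (hg.differentiableAt (hU.mem_nhds ha)).hasDerivAt.comp_ofReal.deriv
    rw [iteratedDeriv_succ', iteratedDeriv_succ', hderiv.iteratedDeriv_eq, ih (hg.deriv hU)]

section InvAddConst

variable {𝕜 : Type*} [NontriviallyNormedField 𝕜]

theorem iteratedDeriv_inv_add_const (n : ℕ) (c z : 𝕜) :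
    iteratedDeriv n (fun z => (z + c)⁻¹) z = (-1) ^ n * n ! * (z + c) ^ (-1 - n : ℤ) := by
  simpa [iteratedDeriv_eq_iterate] using congrFun (iter_deriv_inv_linear n (1 : 𝕜) c) z

theorem iteratedDeriv_inv_add_inv (n : ℕ) {c₁ c₂ z : 𝕜} (h₁ : z + c₁ ≠ 0) (h₂ : z + c₂ ≠ 0) :
    iteratedDeriv n (fun z => (z + c₁)⁻¹ + (z + c₂)⁻¹) z =
      (-1) ^ n * n ! * ((z + c₁) ^ (-1 - n : ℤ) + (z + c₂) ^ (-1 - n : ℤ)) := by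
  rw [iteratedDeriv_fun_add (by fun_prop (disch := assumption))
      (by fun_prop (disch := assumption)),
    iteratedDeriv_inv_add_const, iteratedDeriv_inv_add_const, mul_add]

end InvAddConst

theorem Complex.ofReal_div_sq_add_sq (a t : ℝ) :
    ((a / (a ^ 2 + t ^ 2) : ℝ) : ℂ) = 2⁻¹ * ((a + I * t)⁻¹ + (a + -(I * t))⁻¹) := by
  rcases eq_or_ne (a ^ 2 + t ^ 2) 0 with h | h
  · obtain ⟨rfl, rfl⟩ : a = 0 ∧ t = 0 := by
      constructor <;> nlinarith [sq_nonneg a, sq_nonneg t]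
    simp
  · have hprod : ((a : ℂ) + I * t) * (a + -(I * t)) = ((a ^ 2 + t ^ 2 : ℝ) : ℂ) := by
      push_cast
      ring_nf
      rw [I_sq]
      ring
    have h' : ((a : ℂ) + I * t) * (a + -(I * t)) ≠ 0 := hprod ▸ ofReal_ne_zero.mpr h
    have h₁ := left_ne_zero_of_mul h'
    have h₂ := right_ne_zero_of_mul h'
    rw [ofReal_div, ← hprod]
    field_simp
    ring

theorem iteratedDeriv_div_sq_add_sq (n : ℕ) {ε : ℝ} (hε : ε ≠ 0) (t : ℝ) :
    ((iteratedDeriv n (fun a : ℝ => a / (a ^ 2 + t ^ 2)) ε : ℝ) : ℂ) =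
      2⁻¹ * ((-1) ^ n * n ! * ((ε + I * t) ^ (-1 - n : ℤ) + (ε - I * t) ^ (-1 - n : ℤ))) := by
  set U := {z : ℂ | z + I * t ≠ 0 ∧ z + -(I * t) ≠ 0}
  have hU : IsOpen U :=
    (isOpen_ne_fun (by fun_prop) (by fun_prop)).inter (isOpen_ne_fun (by fun_prop) (by fun_prop))
  have hg : DifferentiableOn ℂ (fun z => 2⁻¹ * ((z + I * t)⁻¹ + (z + -(I * t))⁻¹)) U :=
    fun z ⟨h₁, h₂⟩ => by fun_prop (disch := assumption)
  have hεU : (ε : ℂ) ∈ U := by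
    constructor <;> intro h <;> simpa [hε] using congrArg re h
  rw [← iteratedDeriv_ofReal_comp, funext fun a => ofReal_div_sq_add_sq a t,
    iteratedDeriv_comp_ofReal hg hU n hεU, iteratedDeriv_const_mul_field,
    iteratedDeriv_inv_add_inv n hεU.1 hεU.2, ← sub_eq_add_neg]

theorem K_natCast (n : ℕ) (ε t : ℝ) :
    K n ε t = n ! / (2 * Real.pi) * ((ε + I * t) ^ (-1 - n : ℤ) + (ε - I * t) ^ (-1 - n : ℤ)) := by
  have hexp : -((n : ℂ) + 1) = ((-1 - n : ℤ) : ℂ) := by push_cast; ring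
  rw [K, add_comm 1, Gamma_nat_eq_factorial, hexp, cpow_intCast, cpow_intCast]

/-- For every `n ∈ ℕ`, `ε > 0` and `t ∈ ℝ`,
`K_n^ε(t) = ((-1)^n/π) · Dₐⁿ (a/(a²+t²)) |_{a=ε}`. -/
theorem stmt_3 (n : ℕ) (ε : ℝ) (hε : 0 < ε) (t : ℝ) :
    K (n : ℂ) ε t =
      ((((-1 : ℝ) ^ n / Real.pi) *
        iteratedDeriv n (fun a : ℝ => a / (a ^ 2 + t ^ 2)) ε : ℝ) : ℂ) := by
  have hsign : ((-1 : ℂ) ^ n) * (-1) ^ n = 1 := by rw [← mul_pow]; norm_num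
  push_cast
  rw [K_natCast, iteratedDeriv_div_sq_add_sq n hε.ne' t]
  linear_combination (-(n ! / (2 * Real.pi) : ℂ) *
    ((ε + I * t) ^ (-1 - n : ℤ) + (ε - I * t) ^ (-1 - n : ℤ))) * hsign
end

section
/- Let N ≥ 1 be an integer, s ∈ ℂ with Re(s) > −1/2, and ξ ∈ ℝ with ξ ≠ 0. Set δ = sgn(ξ) ∈ {±1} and define φ : ℝ → ℂ by φ(η) = ∫_ℝ e^{−iη(x−iδ)} · (1+x²)^{−(s+N)} dx. Then J_N(ξ,s) = (−1)^{N(N−1)/2} · N! · e^{N|ξ|} · det( M ), where M is the N×N complex matrix with entries M_{j,k} = (iteratedDeriv (j+k) φ)(ξ) for j, k ∈ {0, 1, …, N−1}. -/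
open MeasureTheory

/-- For an integer `N ≥ 1`, `s ∈ ℂ` with `Re s > -1/2` and `ξ ∈ ℝ`,
`J_N(ξ,s) = ∫_{ℝ^N} (∏ⱼ e^{iξxⱼ} (1+xⱼ²)^{-(s+N)}) ∏_{j<k} (x_k - x_j)² dx`. -/
noncomputable def JN (N : ℕ) (s : ℂ) (ξ : ℝ) : ℂ :=
  ∫ x : Fin N → ℝ,
    (∏ j, Complex.exp (Complex.I * (ξ : ℂ) * (x j : ℂ)) *
      ((1 + (x j) ^ 2 : ℝ) : ℂ) ^ (-(s + (N : ℂ)))) *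
    ∏ j : Fin N, ∏ k ∈ Finset.Ioi j, ((x k - x j : ℝ) : ℂ) ^ 2

/-!
Write `δ = sgn ξ`, so that `ξ δ = |ξ|`. Since `∏_{j<k} (x_k - x_j)² = (-1)^{N(N-1)/2} V²`,
where `V = det [(i x_k - δ)^j]` is a Vandermonde determinant, `J_N` is `(-1)^{N(N-1)/2}` times
the integral of `det [f_j(x_k)] · det [g_j(x_k)]`, with `f_j(x) = (ix - δ)^j` and
`g_j(x) = (ix - δ)^j e^{iξx} (1+x²)^{-(s+N)}`. Andréief's identity turns this integral into
`N! det [∫ f_j g_k]`. On the other hand, after the substitution `x ↦ -x`,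
`φ(η) = ∫ e^{η(ix - δ)} (1+x²)^{-(s+N)} dx`, and differentiating under the integral sign (allowed
up to order `2N - 2` because `Re s > -1/2`) gives `∫ f_j g_k = e^{|ξ|} φ^{(j+k)}(ξ)`.
-/

open Finset Matrix Equiv Complex Filter

namespace Matrix

variable {R : Type*} [CommRing R]

theorem det_vandermonde_mul_left {n : ℕ} (a : R) (v : Fin n → R) :
    (vandermonde fun i ↦ a * v i).det = a ^ (n * (n - 1) / 2) * (vandermonde v).det := by
  have h : vandermonde (fun i ↦ a * v i) =
      of fun i (j : Fin n) ↦ a ^ (j : ℕ) * vandermonde v i j := by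
    ext i j
    simp [mul_pow]
  rw [h, det_mul_row, prod_pow_eq_pow_sum, Fin.sum_univ_eq_sum_range (fun j ↦ j), sum_range_id]

theorem sum_perm_sign_mul_sign_mul_prod {n : Type*} [Fintype n] [DecidableEq n]
    (A : Matrix n n R) :
    ∑ σ : Perm n, ∑ τ : Perm n, (Perm.sign σ : R) * Perm.sign τ * ∏ k, A (σ k) (τ k) =
      ((Fintype.card n).factorial : R) * A.det := by
  have h (τ : Perm n) :
      ∑ σ : Perm n, (Perm.sign σ : R) * Perm.sign τ * ∏ k, A (σ k) (τ k) = A.det := by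
    rw [det_apply', ← Equiv.sum_comp (Equiv.mulRight τ)]
    refine sum_congr rfl fun ρ _ ↦ ?_
    have hτ : (Perm.sign τ : R) * Perm.sign τ = 1 := by
      rw [← Int.cast_mul, ← Units.val_mul, Int.units_mul_self, Units.val_one, Int.cast_one]
    simp only [coe_mulRight, Perm.mul_apply, Perm.sign_mul, Units.val_mul, Int.cast_mul,
      Equiv.prod_comp τ fun k ↦ A (ρ k) k]
    linear_combination (Perm.sign ρ : R) * (∏ k, A (ρ k) k) * hτ
  rw [sum_comm, sum_congr rfl fun τ _ ↦ h τ]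
  simp only [sum_const, card_univ, Fintype.card_perm, nsmul_eq_mul]

end Matrix

section Andreief

variable {𝕜 ι α : Type*} [RCLike 𝕜] [Fintype ι] [DecidableEq ι] [MeasurableSpace α]
  {μ : Measure α} [SigmaFinite μ]

theorem integral_det_mul_det (f g : ι → α → 𝕜)
    (hfg : ∀ i j, Integrable (fun x ↦ f i x * g j x) μ) :
    ∫ x : ι → α, (of fun i k ↦ f i (x k)).det * (of fun i k ↦ g i (x k)).det
        ∂(Measure.pi fun _ ↦ μ) =
      ((Fintype.card ι).factorial : 𝕜) * (of fun i j ↦ ∫ x, f i x * g j x ∂μ).det := by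
  have hexpand (x : ι → α) :
      (of fun i k ↦ f i (x k)).det * (of fun i k ↦ g i (x k)).det =
        ∑ σ : Perm ι, ∑ τ : Perm ι,
          (Perm.sign σ : 𝕜) * Perm.sign τ * ∏ k, f (σ k) (x k) * g (τ k) (x k) := by
    simp only [det_apply', of_apply, sum_mul_sum, prod_mul_distrib]
    exact sum_congr rfl fun σ _ ↦ sum_congr rfl fun τ _ ↦ by ring
  have hint (σ τ : Perm ι) : Integrable (fun x : ι → α ↦ ∏ k, f (σ k) (x k) * g (τ k) (x k))
      (Measure.pi fun _ ↦ μ) :=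
    Integrable.fintype_prod fun k ↦ hfg (σ k) (τ k)
  simp_rw [hexpand]
  rw [integral_finsetSum _ fun σ _ ↦ integrable_finsetSum _ fun τ _ ↦ (hint σ τ).const_mul _]
  rw [← sum_perm_sign_mul_sign_mul_prod]
  refine sum_congr rfl fun σ _ ↦ ?_
  rw [integral_finsetSum _ fun τ _ ↦ (hint σ τ).const_mul _]
  refine sum_congr rfl fun τ _ ↦ ?_
  rw [integral_const_mul, integral_fintype_prod_eq_prod (fun k y ↦ f (σ k) y * g (τ k) y)]
  rfl

end Andreief

section ExpIntegral

variable {α : Type*} [MeasurableSpace α] {μ : Measure α} {u f : α → ℂ} {B : ℝ}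

theorem norm_cexp_ofReal_mul_le {η r : ℝ} {z : ℂ} (hη : |η| ≤ r) (hz : |z.re| ≤ B) :
    ‖cexp (η * z)‖ ≤ Real.exp (r * B) := by
  rw [norm_exp, re_ofReal_mul, Real.exp_le_exp]
  calc η * z.re ≤ |η| * |z.re| := (le_abs_self _).trans (abs_mul _ _).le
    _ ≤ r * B := mul_le_mul hη hz (abs_nonneg _) ((abs_nonneg _).trans hη)

theorem integrable_cexp_mul (hu : AEStronglyMeasurable u μ) (hB : ∀ x, |(u x).re| ≤ B)
    (hf : Integrable f μ) (η : ℝ) : Integrable (fun x ↦ cexp (η * u x) * f x) μ := by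
  refine (hf.norm.const_mul (Real.exp (|η| * B))).mono'
    ((continuous_exp.comp_aestronglyMeasurable (hu.const_mul _)).mul hf.1)
    (Eventually.of_forall fun x ↦ ?_)
  rw [norm_mul]
  exact mul_le_mul_of_nonneg_right (norm_cexp_ofReal_mul_le le_rfl (hB x)) (norm_nonneg _)

theorem hasDerivAt_integral_cexp_mul (hu : AEStronglyMeasurable u μ) (hB : ∀ x, |(u x).re| ≤ B)
    (hf : Integrable f μ) (huf : Integrable (fun x ↦ u x * f x) μ) (η : ℝ) :
    HasDerivAt (fun η : ℝ ↦ ∫ x, cexp (η * u x) * f x ∂μ)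
      (∫ x, cexp (η * u x) * (u x * f x) ∂μ) η := by
  refine (hasDerivAt_integral_of_dominated_loc_of_deriv_le (Metric.ball_mem_nhds η one_pos)
    (F := fun (η : ℝ) x ↦ cexp (η * u x) * f x)
    (F' := fun (η : ℝ) x ↦ cexp (η * u x) * (u x * f x))
    (Eventually.of_forall fun η' ↦ (integrable_cexp_mul hu hB hf η').1)
    (integrable_cexp_mul hu hB hf η) (integrable_cexp_mul hu hB huf η).1
    (bound := fun x ↦ Real.exp ((|η| + 1) * B) * ‖u x * f x‖) ?_
    (huf.norm.const_mul _) ?_).2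
  · refine Eventually.of_forall fun x η' hη' ↦ ?_
    have hη'' : |η'| ≤ |η| + 1 := by
      have := abs_sub_abs_le_abs_sub η' η
      rw [Metric.mem_ball, Real.dist_eq] at hη'
      linarith
    rw [norm_mul]
    exact mul_le_mul_of_nonneg_right (norm_cexp_ofReal_mul_le hη'' (hB x)) (norm_nonneg _)
  · refine Eventually.of_forall fun x η' _ ↦ ?_
    exact (((hasDerivAt_mul_const (u x)).cexp.comp_ofReal).mul_const (f x)).congr_deriv
      (by ring)

theorem iteratedDeriv_integral_cexp_mul (hu : AEStronglyMeasurable u μ)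
    (hB : ∀ x, |(u x).re| ≤ B) {n : ℕ} (hf : ∀ k ≤ n, Integrable (fun x ↦ u x ^ k * f x) μ) :
    iteratedDeriv n (fun η : ℝ ↦ ∫ x, cexp (η * u x) * f x ∂μ) =
      fun (η : ℝ) ↦ ∫ x, cexp (η * u x) * (u x ^ n * f x) ∂μ := by
  induction n with
  | zero => simp
  | succ n ih =>
    rw [iteratedDeriv_succ, ih fun k hk ↦ hf k (by omega)]
    funext η
    have huf : Integrable (fun x ↦ u x * (u x ^ n * f x)) μ := by
      simpa only [pow_succ, mul_comm, mul_left_comm] using hf (n + 1) le_rfl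
    rw [(hasDerivAt_integral_cexp_mul hu hB (hf n n.le_succ) huf η).deriv]
    simp only [pow_succ, mul_comm, mul_left_comm]

end ExpIntegral

noncomputable def cauchyWeight (c : ℂ) (x : ℝ) : ℂ := ((1 + x ^ 2 : ℝ) : ℂ) ^ (-c)

theorem norm_cauchyWeight (c : ℂ) (x : ℝ) : ‖cauchyWeight c x‖ = (1 + x ^ 2) ^ (-c.re) := by
  rw [cauchyWeight, norm_cpow_eq_rpow_re_of_pos (by positivity), neg_re]

theorem continuous_cauchyWeight (c : ℂ) : Continuous (cauchyWeight c) :=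
  (continuous_ofReal.comp (by fun_prop)).cpow continuous_const
    fun x ↦ Or.inl (by simp only [Function.comp_apply, ofReal_re]; positivity)

theorem integrable_pow_mul_cauchyWeight {z : ℝ → ℂ} (hz : AEStronglyMeasurable z) {C : ℝ}
    (hzC : ∀ x, ‖z x‖ ^ 2 ≤ C * (1 + x ^ 2)) {c : ℂ} {k : ℕ} (hk : (k : ℝ) + 1 < 2 * c.re) :
    Integrable fun x ↦ z x ^ k * cauchyWeight c x := by
  have hC : 0 ≤ C := by nlinarith [hzC 0, sq_nonneg ‖z 0‖]
  have hint : Integrable fun x : ℝ ↦ (1 + ‖x‖ ^ 2) ^ (-(2 * c.re - k) / 2) :=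
    integrable_rpow_neg_one_add_norm_sq (by simp; linarith)
  refine (hint.const_mul (C ^ ((k : ℝ) / 2))).mono'
    ((hz.pow k).mul (continuous_cauchyWeight c).aestronglyMeasurable)
    (Eventually.of_forall fun x ↦ ?_)
  have hx : (0 : ℝ) < 1 + x ^ 2 := by positivity
  rw [norm_mul, norm_pow, norm_cauchyWeight, Real.norm_eq_abs, sq_abs]
  calc ‖z x‖ ^ k * (1 + x ^ 2) ^ (-c.re)
      = (‖z x‖ ^ 2) ^ ((k : ℝ) / 2) * (1 + x ^ 2) ^ (-c.re) := by
        rw [← Real.rpow_natCast ‖z x‖ 2, ← Real.rpow_mul (norm_nonneg _), Nat.cast_ofNat,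
          mul_div_cancel₀ _ two_ne_zero, Real.rpow_natCast]
    _ ≤ (C * (1 + x ^ 2)) ^ ((k : ℝ) / 2) * (1 + x ^ 2) ^ (-c.re) := by
        gcongr
        exact hzC x
    _ = C ^ ((k : ℝ) / 2) * (1 + x ^ 2) ^ (-(2 * c.re - k) / 2) := by
        rw [Real.mul_rpow hC hx.le, mul_assoc, ← Real.rpow_add hx]
        congr 3
        ring

theorem integrable_I_mul_sub_pow_mul_cauchyWeight (c : ℂ) (δ : ℝ) {m : ℕ}
    (hm : (m : ℝ) + 1 < 2 * c.re) :
    Integrable fun x : ℝ ↦ (I * x - δ) ^ m * cauchyWeight c x := by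
  refine integrable_pow_mul_cauchyWeight (by fun_prop) (C := 1 + δ ^ 2) (fun x ↦ ?_) hm
  rw [Complex.sq_norm, normSq_apply]
  simp only [sub_re, mul_re, I_re, ofReal_re, I_im, ofReal_im, sub_im, mul_im]
  nlinarith [sq_nonneg (δ * x)]

theorem iteratedDeriv_integral_cexp_mul_cauchyWeight (c : ℂ) (δ : ℝ) {m : ℕ}
    (hm : (m : ℝ) + 1 < 2 * c.re) (η : ℝ) :
    iteratedDeriv m (fun η : ℝ ↦ ∫ x : ℝ, cexp (-(I * η * (x - I * δ))) * cauchyWeight c x) η =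
      ∫ x : ℝ, cexp (η * (I * x - δ)) * ((I * x - δ) ^ m * cauchyWeight c x) := by
  have hreflect : (fun η : ℝ ↦ ∫ x : ℝ, cexp (-(I * η * (x - I * δ))) * cauchyWeight c x) =
      fun η : ℝ ↦ ∫ x : ℝ, cexp (η * (I * x - δ)) * cauchyWeight c x := by
    funext η
    rw [← integral_neg_eq_self]
    refine integral_congr_ae (Eventually.of_forall fun x ↦ ?_)
    simp only [cauchyWeight, ofReal_neg, neg_sq]
    congr 2
    linear_combination (η * δ : ℂ) * I_sq
  rw [hreflect, iteratedDeriv_integral_cexp_mul (B := |δ|) (by fun_prop) (fun x ↦ by simp)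
    fun k hk ↦ integrable_I_mul_sub_pow_mul_cauchyWeight c δ
      (lt_of_le_of_lt (by gcongr) hm)]

theorem det_vandermonde_I_mul_sub_sq {n : ℕ} (x : Fin n → ℝ) (b : ℂ) :
    (vandermonde fun k ↦ I * x k - b).det ^ 2 =
      (-1) ^ (n * (n - 1) / 2) * ∏ j, ∏ k ∈ Ioi j, ((x k - x j : ℝ) : ℂ) ^ 2 := by
  rw [det_vandermonde_sub (fun k ↦ I * x k) b, det_vandermonde_mul_left, det_vandermonde, mul_pow,
    ← pow_mul, mul_comm _ 2, pow_mul, I_sq]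
  simp only [← prod_pow, ofReal_sub]

theorem prod_mul_prod_sub_sq_eq_det_mul_det {n : ℕ} (v : ℝ → ℂ) (x : Fin n → ℝ) (b : ℂ) :
    (∏ j, v (x j)) * ∏ j, ∏ k ∈ Ioi j, ((x k - x j : ℝ) : ℂ) ^ 2 =
      (-1) ^ (n * (n - 1) / 2) * ((of fun j k : Fin n ↦ (I * x k - b) ^ (j : ℕ)).det *
        (of fun j k : Fin n ↦ (I * x k - b) ^ (j : ℕ) * v (x k)).det) := by
  have hF : (of fun j k : Fin n ↦ (I * x k - b) ^ (j : ℕ)).det =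
      (vandermonde fun k ↦ I * x k - b).det :=
    det_transpose _
  have hG : (of fun j k : Fin n ↦ (I * x k - b) ^ (j : ℕ) * v (x k)).det =
      (∏ k, v (x k)) * (of fun j k : Fin n ↦ (I * x k - b) ^ (j : ℕ)).det := by
    simp_rw [mul_comm _ (v _)]
    exact det_mul_row _ _
  have hsign : ((-1 : ℂ) ^ (n * (n - 1) / 2)) ^ 2 = 1 := by
    rw [← pow_mul, pow_mul', neg_one_sq, one_pow]
  rw [hG, hF]
  linear_combination (-(-1 : ℂ) ^ (n * (n - 1) / 2) * ∏ k, v (x k)) *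
      det_vandermonde_I_mul_sub_sq x b -
    ((∏ j, v (x j)) * ∏ j, ∏ k ∈ Ioi j, ((x k - x j : ℝ) : ℂ) ^ 2) * hsign

theorem pow_mul_cexp_mul_eq (δ ξ x : ℝ) (m : ℕ) (w : ℂ) :
    (I * x - δ) ^ m * (cexp (I * ξ * x) * w) =
      Real.exp (ξ * δ) * (cexp (ξ * (I * x - δ)) * ((I * x - δ) ^ m * w)) := by
  have hexp : cexp (I * ξ * x) = Real.exp (ξ * δ) * cexp (ξ * (I * x - δ)) := by
    rw [ofReal_exp, ← exp_add]
    push_cast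
    ring_nf
  rw [hexp]
  ring

theorem integrable_I_mul_sub_pow_mul_cexp_mul_cauchyWeight (c : ℂ) (δ ξ : ℝ) {m : ℕ}
    (hm : (m : ℝ) + 1 < 2 * c.re) :
    Integrable fun x : ℝ ↦ (I * x - δ) ^ m * (cexp (I * ξ * x) * cauchyWeight c x) := by
  simp_rw [pow_mul_cexp_mul_eq]
  exact (integrable_cexp_mul (B := |δ|) (by fun_prop) (fun x ↦ by simp)
    (integrable_I_mul_sub_pow_mul_cauchyWeight c δ hm) ξ).const_mul _

theorem integral_I_mul_sub_pow_mul_cexp_mul_cauchyWeight (c : ℂ) (δ ξ : ℝ) {m : ℕ}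
    (hm : (m : ℝ) + 1 < 2 * c.re) :
    ∫ x : ℝ, (I * x - δ) ^ m * (cexp (I * ξ * x) * cauchyWeight c x) =
      Real.exp (ξ * δ) * iteratedDeriv m
        (fun η : ℝ ↦ ∫ x : ℝ, cexp (-(I * η * (x - I * δ))) * cauchyWeight c x) ξ := by
  simp_rw [pow_mul_cexp_mul_eq]
  rw [integral_const_mul, iteratedDeriv_integral_cexp_mul_cauchyWeight c δ hm]

theorem mul_sign_self_eq_abs (x : ℝ) : x * Real.sign x = |x| := by
  rcases lt_trichotomy x 0 with h | rfl | h
  · simp [Real.sign_of_neg h, abs_of_neg h]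
  · simp
  · simp [Real.sign_of_pos h, abs_of_pos h]

theorem stmt_5_general (N : ℕ) (s : ℂ) (hs : -(1 / 2 : ℝ) < s.re)
    (ξ : ℝ) :
    JN N s ξ =
      (-1 : ℂ) ^ (N * (N - 1) / 2) * (N.factorial : ℂ) * (Real.exp (N * |ξ|) : ℂ) *
        Matrix.det (Matrix.of fun j k : Fin N =>
          iteratedDeriv (j.1 + k.1)
            (fun η : ℝ => ∫ x : ℝ,
              Complex.exp (-(Complex.I * (η : ℂ) *
                ((x : ℂ) - Complex.I * (Real.sign ξ : ℂ)))) *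
                ((1 + x ^ 2 : ℝ) : ℂ) ^ (-(s + (N : ℂ)))) ξ) := by
  set δ := Real.sign ξ
  let v (x : ℝ) : ℂ := cexp (I * ξ * x) * cauchyWeight (s + N) x
  let f (j : Fin N) (x : ℝ) : ℂ := (I * x - δ) ^ (j : ℕ)
  let g (j : Fin N) (x : ℝ) : ℂ := (I * x - δ) ^ (j : ℕ) * v x
  have hfg (j k : Fin N) :
      (fun x ↦ f j x * g k x) = fun x ↦ (I * x - δ) ^ (j + k : ℕ) * v x := by
    funext x
    simp only [f, g, pow_add, mul_assoc]
  have hm (j k : Fin N) : ((j + k : ℕ) : ℝ) + 1 < 2 * (s + N).re := by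
    have hjk : ((j + k + 2 : ℕ) : ℝ) ≤ 2 * N := by exact_mod_cast (by omega : j + k + 2 ≤ 2 * N)
    simp only [add_re, natCast_re]
    push_cast at hjk ⊢
    linarith
  calc
    JN N s ξ = (-1) ^ (N * (N - 1) / 2) *
        ∫ x : Fin N → ℝ, (of fun j k ↦ f j (x k)).det * (of fun j k ↦ g j (x k)).det := by
      rw [JN, ← integral_const_mul]
      exact integral_congr_ae (Eventually.of_forall fun x ↦
        prod_mul_prod_sub_sq_eq_det_mul_det v x δ)
    _ = _ := by
      have hmatrix : (of fun j k ↦ ∫ x, f j x * g k x) = (Real.exp |ξ| : ℂ) •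
          of fun j k : Fin N ↦ iteratedDeriv (j + k) (fun η : ℝ ↦ ∫ x : ℝ,
            cexp (-(I * η * (x - I * δ))) * cauchyWeight (s + N) x) ξ :=
        ext fun j k ↦ by
          rw [of_apply, Matrix.smul_apply, of_apply, smul_eq_mul, hfg,
            integral_I_mul_sub_pow_mul_cexp_mul_cauchyWeight _ δ ξ (hm j k), mul_sign_self_eq_abs]
      rw [volume_pi, integral_det_mul_det f g fun j k ↦ hfg j k ▸
          integrable_I_mul_sub_pow_mul_cexp_mul_cauchyWeight _ δ ξ (hm j k),
        hmatrix, det_smul, Fintype.card_fin, Real.exp_nat_mul, ofReal_pow]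
      simp only [mul_assoc]
      rfl

/-- For `N ≥ 1`, `Re s > -1/2` and `ξ ≠ 0`, with `δ = sgn ξ` and
`φ(η) = ∫_ℝ e^{-iη(x-iδ)} (1+x²)^{-(s+N)} dx`, one has
`J_N(ξ,s) = (-1)^{N(N-1)/2} N! e^{N|ξ|} det (φ^{(j+k)}(ξ))_{j,k=0}^{N-1}`. -/
theorem stmt_5 (N : ℕ) (hN : 1 ≤ N) (s : ℂ) (hs : -(1 / 2 : ℝ) < s.re)
    (ξ : ℝ) (hξ : ξ ≠ 0) :
    JN N s ξ =
      (-1 : ℂ) ^ (N * (N - 1) / 2) * (N.factorial : ℂ) * (Real.exp (N * |ξ|) : ℂ) *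
        Matrix.det (Matrix.of fun j k : Fin N =>
          iteratedDeriv (j.1 + k.1)
            (fun η : ℝ => ∫ x : ℝ,
              Complex.exp (-(Complex.I * (η : ℂ) *
                ((x : ℂ) - Complex.I * (Real.sign ξ : ℂ)))) *
                ((1 + x ^ 2 : ℝ) : ℂ) ^ (-(s + (N : ℂ)))) ξ) :=
  stmt_5_general N s hs ξ
end

section
/- For every real λ > 1 one has (4/π) · ∫_0^1 log(λ−x) · √((1−x)/x) dx − 4λ + 2 + 4·log 2 = −4 · ∫_1^λ √((x−1)/x) dx, and in particular the left-hand side is strictly negative. -/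
open MeasureTheory

/-!
Writing `log λ - log (λ - x) = ∫₀¹ x / (λ - s x) ds` and exchanging the order of integration
turns the left-hand side into an integral over `s` of `∫₀¹ √(x (1 - x)) / (λ - s x) dx`, which is
elementary and equals `π / (2λ (1 + √(1 - s/λ))²)`. This `s`-integral and `∫₁^λ √((x-1)/x) dx`
both have closed forms in `r = √(1 - 1/λ)`, and comparing them gives the identity; the integral
on the right is positive because its integrand is.
-/

open Real Set intervalIntegral

lemma setIntegral_Ioo_eq_intervalIntegral {E : Type*} [NormedAddCommGroup E] [NormedSpace ℝ E]
    {a b : ℝ} (hab : a ≤ b) (f : ℝ → E) : ∫ x in Ioo a b, f x = ∫ x in a..b, f x := by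
  rw [integral_of_le hab, integral_Ioc_eq_integral_Ioo]

lemma hasDerivAt_sqrt_mul_one_sub {x : ℝ} (h0 : 0 < x) (h1 : x < 1) :
    HasDerivAt (fun y : ℝ => √(y * (1 - y))) ((1 - 2 * x) / (2 * √(x * (1 - x)))) x := by
  have hp : HasDerivAt (fun y : ℝ => y * (1 - y)) (1 - 2 * x) x :=
    ((hasDerivAt_id' x).mul ((hasDerivAt_id' x).const_sub 1)).congr_deriv (by ring)
  exact ((hasDerivAt_sqrt (by nlinarith)).comp x hp).congr_deriv (by field_simp)

lemma hasDerivAt_arcsin_two_mul_sub_one {x : ℝ} (h0 : 0 < x) (h1 : x < 1) :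
    HasDerivAt (fun y : ℝ => arcsin (2 * y - 1)) (1 / √(x * (1 - x))) x := by
  have hlin : HasDerivAt (fun y : ℝ => 2 * y - 1) 2 x := by
    simpa using ((hasDerivAt_id x).const_mul 2).sub_const 1
  refine ((hasDerivAt_arcsin (by linarith) (by linarith)).comp x hlin).congr_deriv ?_
  have hA : 0 < √(x * (1 - x)) := sqrt_pos.mpr (by nlinarith)
  rw [show (1 : ℝ) - (2 * x - 1) ^ 2 = 2 ^ 2 * (x * (1 - x)) by ring,
    sqrt_mul (by positivity), sqrt_sq zero_le_two]
  field_simp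

lemma sqrt_one_sub_div_self {x : ℝ} (h0 : 0 < x) (h1 : x < 1) :
    √((1 - x) / x) = (1 - x) / √(x * (1 - x)) := by
  rw [show (1 - x) / x = (1 - x) ^ 2 / (x * (1 - x)) by
      rw [div_eq_div_iff h0.ne' (by nlinarith)]; ring,
    sqrt_div (sq_nonneg _), sqrt_sq (by linarith)]

lemma intervalIntegrable_sqrt_one_sub_div_self :
    IntervalIntegrable (fun x : ℝ => √((1 - x) / x)) volume 0 1 := by
  refine (intervalIntegrable_rpow' (by norm_num : (-1 : ℝ) < -(1 / 2))).mono_fun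
    ((measurable_id.const_sub 1).div measurable_id).sqrt.aestronglyMeasurable ?_
  rw [uIoc_of_le zero_le_one]
  refine (ae_restrict_iff' measurableSet_Ioc).mpr (.of_forall fun x ⟨h0, h1⟩ => ?_)
  dsimp only
  rw [norm_of_nonneg (sqrt_nonneg _), norm_of_nonneg (rpow_nonneg h0.le _), rpow_neg h0.le,
    ← sqrt_eq_rpow, ← sqrt_inv]
  exact sqrt_le_sqrt (div_le_div_of_nonneg_right (by linarith) h0.le |>.trans_eq (one_div x))

lemma integral_sqrt_one_sub_div_self : ∫ x in (0 : ℝ)..1, √((1 - x) / x) = π / 2 := by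
  have hderiv : ∀ x ∈ Ioo (0 : ℝ) 1,
      HasDerivAt (fun x : ℝ => √(x * (1 - x)) + arcsin (2 * x - 1) / 2) (√((1 - x) / x)) x := by
    rintro x ⟨h0, h1⟩
    refine ((hasDerivAt_sqrt_mul_one_sub h0 h1).add
      ((hasDerivAt_arcsin_two_mul_sub_one h0 h1).div_const 2)).congr_deriv ?_
    have hA : 0 < √(x * (1 - x)) := sqrt_pos.mpr (by nlinarith)
    rw [sqrt_one_sub_div_self h0 h1]
    field_simp
    ring
  rw [integral_eq_sub_of_hasDerivAt_of_le zero_le_one (by fun_prop) hderiv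
    intervalIntegrable_sqrt_one_sub_div_self]
  norm_num
  ring

/-- The Möbius map here sends `0, 1, t` to `-1, 1, ∞`; its `arcsin` is the transcendental part
of a primitive of `√(x (1 - x)) / (t - x)`. -/
lemma hasDerivAt_arcsin_moebius {t x : ℝ} (ht : 1 < t) (h0 : 0 < x) (h1 : x < 1) :
    HasDerivAt (fun y : ℝ => √(t * (t - 1)) * arcsin (((2 * t - 1) * y - t) / (t - y)))
      ((t * (t - 1)) / (√(x * (1 - x)) * (t - x))) x := by
  have htx : 0 < t - x := by linarith
  have hS : 0 < √(t * (t - 1)) := sqrt_pos.mpr (by nlinarith)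
  have hA : 0 < √(x * (1 - x)) := sqrt_pos.mpr (by nlinarith)
  have hφ : HasDerivAt (fun y : ℝ => ((2 * t - 1) * y - t) / (t - y))
      (2 * (t * (t - 1)) / (t - x) ^ 2) x := by
    have hnum : HasDerivAt (fun y : ℝ => (2 * t - 1) * y - t) (2 * t - 1) x := by
      simpa using ((hasDerivAt_id x).const_mul (2 * t - 1)).sub_const t
    have hden : HasDerivAt (fun y : ℝ => t - y) (-1) x := by
      simpa using (hasDerivAt_id x).const_sub t
    exact (hnum.div hden htx.ne').congr_deriv (by field_simp; ring)
  have hφ_ne_one : ((2 * t - 1) * x - t) / (t - x) ≠ 1 := by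
    rw [Ne, div_eq_one_iff_eq htx.ne']; nlinarith
  have hφ_ne_neg_one : ((2 * t - 1) * x - t) / (t - x) ≠ -1 := by
    rw [Ne, div_eq_iff htx.ne']; nlinarith
  have hsqrt : √(1 - (((2 * t - 1) * x - t) / (t - x)) ^ 2)
      = 2 * √(t * (t - 1)) * √(x * (1 - x)) / (t - x) := by
    rw [← sqrt_sq (by positivity : 0 ≤ 2 * √(t * (t - 1)) * √(x * (1 - x)) / (t - x))]
    congr 1
    simp only [div_pow, mul_pow, sq_sqrt (by nlinarith : 0 ≤ t * (t - 1)),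
      sq_sqrt (by nlinarith : 0 ≤ x * (1 - x))]
    field_simp
    ring
  refine (((hasDerivAt_arcsin hφ_ne_neg_one hφ_ne_one).comp x hφ).const_mul _).congr_deriv ?_
  rw [hsqrt]
  field_simp

lemma integral_sqrt_mul_one_sub_div_sub {t : ℝ} (ht : 1 < t) :
    ∫ x in (0 : ℝ)..1, √(x * (1 - x)) / (t - x) = π * (t - 1 / 2 - √(t * (t - 1))) := by
  have hden : ∀ x ∈ Icc (0 : ℝ) 1, t - x ≠ 0 := fun x hx => by linarith [hx.2]
  have hcont : ContinuousOn (fun x : ℝ => -√(x * (1 - x)) + (t - 1 / 2) * arcsin (2 * x - 1)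
      - √(t * (t - 1)) * arcsin (((2 * t - 1) * x - t) / (t - x))) (Icc 0 1) := by
    have : ContinuousOn (fun x : ℝ => ((2 * t - 1) * x - t) / (t - x)) (Icc 0 1) :=
      ContinuousOn.div (by fun_prop) (by fun_prop) hden
    exact (Continuous.continuousOn (by fun_prop)).sub
      (continuousOn_const.mul (continuous_arcsin.comp_continuousOn this))
  have hderiv : ∀ x ∈ Ioo (0 : ℝ) 1, HasDerivAt (fun x : ℝ => -√(x * (1 - x))
      + (t - 1 / 2) * arcsin (2 * x - 1)
      - √(t * (t - 1)) * arcsin (((2 * t - 1) * x - t) / (t - x)))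
      (√(x * (1 - x)) / (t - x)) x := by
    rintro x ⟨h0, h1⟩
    refine (((hasDerivAt_sqrt_mul_one_sub h0 h1).neg.add
      ((hasDerivAt_arcsin_two_mul_sub_one h0 h1).const_mul _)).sub
      (hasDerivAt_arcsin_moebius ht h0 h1)).congr_deriv ?_
    have hA2 : √(x * (1 - x)) ^ 2 = x * (1 - x) := sq_sqrt (by nlinarith)
    have hA : 0 < √(x * (1 - x)) := sqrt_pos.mpr (by nlinarith)
    have htx : t - x ≠ 0 := by linarith
    field_simp
    linear_combination (-2 : ℝ) * hA2
  have hint : IntervalIntegrable (fun x => √(x * (1 - x)) / (t - x)) volume 0 1 := by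
    refine ContinuousOn.intervalIntegrable ?_
    rw [uIcc_of_le zero_le_one]
    exact ContinuousOn.div (by fun_prop) (by fun_prop) hden
  rw [integral_eq_sub_of_hasDerivAt_of_le zero_le_one hcont hderiv hint]
  have e1 : ((2 * t - 1) * 1 - t) / (t - 1) = 1 := by
    rw [div_eq_one_iff_eq (by linarith)]; ring
  have e0 : ((2 * t - 1) * 0 - t) / (t - 0) = -1 := by
    rw [div_eq_iff (by linarith)]; ring
  simp only [e1, e0, arcsin_one, arcsin_neg_one]
  norm_num
  ring

lemma setIntegral_sqrt_mul_one_sub_div_sub_mul {lam s : ℝ} (hs : 0 < s) (hslam : s < lam) :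
    ∫ x in Ioo (0 : ℝ) 1, √(x * (1 - x)) / (lam - s * x)
      = π * (2 * lam * (1 + √(1 - s / lam)) ^ 2)⁻¹ := by
  have hlam : 0 < lam := hs.trans hslam
  have hscale : ∀ x : ℝ, √(x * (1 - x)) / (lam - s * x) = s⁻¹ * (√(x * (1 - x)) / (lam / s - x)) :=
    fun x => by
      rw [show lam - s * x = s * (lam / s - x) by field_simp, mul_comm s, div_mul_eq_div_div,
        div_eq_inv_mul _ s]
  simp_rw [hscale]
  rw [MeasureTheory.integral_const_mul, setIntegral_Ioo_eq_intervalIntegral zero_le_one,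
    integral_sqrt_mul_one_sub_div_sub ((one_lt_div hs).mpr hslam)]
  have hr2 : √(1 - s / lam) ^ 2 = 1 - s / lam :=
    sq_sqrt (sub_nonneg.mpr ((div_le_one hlam).mpr hslam.le))
  set r := √(1 - s / lam)
  have hr : 0 ≤ r := sqrt_nonneg _
  have hr2' : lam * r ^ 2 = lam - s := by rw [hr2]; field_simp
  rw [show lam / s * (lam / s - 1) = (lam * r / s) ^ 2 by field_simp; linear_combination -hr2',
    sqrt_sq (by positivity)]
  field_simp
  linear_combination (-2 * lam * r - s - 2 * lam) * hr2'

lemma integral_div_sub_mul {lam x : ℝ} (hlam : 0 < lam) (hx : x < lam) :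
    ∫ s in (0 : ℝ)..1, x / (lam - s * x) = log lam - log (lam - x) := by
  have hpos : ∀ s ∈ uIcc (0 : ℝ) 1, 0 < lam - s * x := by
    intro s hs
    rw [uIcc_of_le zero_le_one] at hs
    rcases le_total 0 x with h | h <;> nlinarith [hs.1, hs.2]
  have hderiv : ∀ s ∈ uIcc (0 : ℝ) 1,
      HasDerivAt (fun s : ℝ => -log (lam - s * x)) (x / (lam - s * x)) s := by
    intro s hs
    have hlin : HasDerivAt (fun s : ℝ => lam - s * x) (-x) s := by
      simpa using ((hasDerivAt_id s).mul_const x).const_sub lam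
    exact (hlin.log (hpos s hs).ne').neg.congr_deriv (by ring)
  have hint : IntervalIntegrable (fun s : ℝ => x / (lam - s * x)) volume 0 1 :=
    (ContinuousOn.div (by fun_prop) (by fun_prop) fun s hs => (hpos s hs).ne').intervalIntegrable
  rw [integral_eq_sub_of_hasDerivAt hderiv hint]
  norm_num
  ring

lemma log_sub_mul_sqrt_one_sub_div_self {lam x : ℝ} (h0 : 0 < x) (h1 : x < 1) (hx : x < lam) :
    log (lam - x) * √((1 - x) / x)
      = log lam * √((1 - x) / x) - ∫ s in Ioo (0 : ℝ) 1, √(x * (1 - x)) / (lam - s * x) := by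
  have hA : 0 < √(x * (1 - x)) := sqrt_pos.mpr (by nlinarith)
  have hnum : ∀ s : ℝ, √(x * (1 - x)) / (lam - s * x) = √((1 - x) / x) * (x / (lam - s * x)) :=
    fun s => by
      rw [sqrt_one_sub_div_self h0 h1, ← mul_div_assoc, div_mul_eq_mul_div]
      congr 1
      field_simp
      nlinarith [sq_sqrt (show (0 : ℝ) ≤ x * (1 - x) by nlinarith)]
  simp_rw [hnum]
  rw [MeasureTheory.integral_const_mul, setIntegral_Ioo_eq_intervalIntegral zero_le_one,
    integral_div_sub_mul (h0.trans hx) hx]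
  ring

lemma integrable_sqrt_mul_one_sub_div_sub_mul {lam : ℝ} (hlam : 1 < lam) :
    Integrable (fun p : ℝ × ℝ => √(p.1 * (1 - p.1)) / (lam - p.2 * p.1))
      ((volume.restrict (Ioo 0 1)).prod (volume.restrict (Ioo 0 1))) := by
  refine Integrable.mono' (integrable_const (2 * (lam - 1))⁻¹)
    (by fun_prop : Measurable _).aestronglyMeasurable ?_
  rw [Measure.prod_restrict]
  refine (ae_restrict_iff' (measurableSet_Ioo.prod measurableSet_Ioo)).mpr
    (.of_forall fun p ⟨⟨hx0, hx1⟩, ⟨hs0, hs1⟩⟩ => ?_)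
  have hnum : √(p.1 * (1 - p.1)) ≤ 1 / 2 := by
    rw [show (1 : ℝ) / 2 = √((1 / 2) ^ 2) by rw [sqrt_sq]; norm_num]
    exact sqrt_le_sqrt (by nlinarith [sq_nonneg (p.1 - 1 / 2)])
  have hden : lam - 1 ≤ lam - p.2 * p.1 := by nlinarith
  rw [norm_div, norm_of_nonneg (sqrt_nonneg _), norm_of_nonneg (by linarith), mul_inv,
    div_eq_mul_inv, ← one_div 2]
  exact mul_le_mul hnum ((inv_le_inv₀ (by linarith) (by linarith)).mpr hden)
    (inv_nonneg.mpr (by linarith)) (by norm_num)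

lemma setIntegral_log_sub_mul_sqrt_one_sub_div_self {lam : ℝ} (hlam : 1 < lam) :
    ∫ x in Ioo (0 : ℝ) 1, log (lam - x) * √((1 - x) / x)
      = π / 2 * log lam - π * ∫ s in (0 : ℝ)..1, (2 * lam * (1 + √(1 - s / lam)) ^ 2)⁻¹ := by
  have hK := integrable_sqrt_mul_one_sub_div_sub_mul hlam
  have hsqrt : IntegrableOn (fun x : ℝ => √((1 - x) / x)) (Ioo 0 1) :=
    ((intervalIntegrable_iff_integrableOn_Ioc_of_le zero_le_one).mp
      intervalIntegrable_sqrt_one_sub_div_self).mono_set Ioo_subset_Ioc_self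
  calc ∫ x in Ioo (0 : ℝ) 1, log (lam - x) * √((1 - x) / x)
      = ∫ x in Ioo (0 : ℝ) 1, (log lam * √((1 - x) / x)
          - ∫ s in Ioo (0 : ℝ) 1, √(x * (1 - x)) / (lam - s * x)) :=
        setIntegral_congr_fun measurableSet_Ioo fun x ⟨h0, h1⟩ =>
          log_sub_mul_sqrt_one_sub_div_self h0 h1 (h1.trans hlam)
    _ = log lam * (π / 2)
          - ∫ s in Ioo (0 : ℝ) 1, ∫ x in Ioo (0 : ℝ) 1, √(x * (1 - x)) / (lam - s * x) := by
        rw [integral_sub (hsqrt.const_mul _) hK.integral_prod_left]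
        dsimp only
        rw [MeasureTheory.integral_const_mul,
          integral_integral_swap hK, setIntegral_Ioo_eq_intervalIntegral zero_le_one,
          integral_sqrt_one_sub_div_self]
    _ = π / 2 * log lam - π * ∫ s in (0 : ℝ)..1, (2 * lam * (1 + √(1 - s / lam)) ^ 2)⁻¹ := by
        rw [setIntegral_congr_fun measurableSet_Ioo fun s ⟨hs0, hs1⟩ =>
          setIntegral_sqrt_mul_one_sub_div_sub_mul hs0 (hs1.trans hlam),
          MeasureTheory.integral_const_mul, setIntegral_Ioo_eq_intervalIntegral zero_le_one]
        ring

lemma integral_inv_two_mul_one_add_sqrt_one_sub_div_sq {lam : ℝ} (hlam : 1 ≤ lam) :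
    ∫ s in (0 : ℝ)..1, (2 * lam * (1 + √(1 - s / lam)) ^ 2)⁻¹
      = 1 / 2 + log 2 - (1 + √(1 - 1 / lam))⁻¹ - log (1 + √(1 - 1 / lam)) := by
  have hlam0 : 0 < lam := one_pos.trans_le hlam
  have h1r : ∀ s : ℝ, 0 < 1 + √(1 - s / lam) := fun s => by positivity
  have hderiv : ∀ s ∈ Ioo (0 : ℝ) 1, HasDerivAt (fun s : ℝ => -(1 + √(1 - s / lam))⁻¹
      - log (1 + √(1 - s / lam))) ((2 * lam * (1 + √(1 - s / lam)) ^ 2)⁻¹) s := by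
    rintro s ⟨-, hs1⟩
    have hin : 0 < 1 - s / lam := sub_pos.mpr ((div_lt_one hlam0).mpr (by linarith))
    have hr : 0 < √(1 - s / lam) := sqrt_pos.mpr hin
    have hlin : HasDerivAt (fun s : ℝ => 1 - s / lam) (-(1 / lam)) s := by
      simpa using ((hasDerivAt_id s).div_const lam).const_sub 1
    have h1r' : HasDerivAt (fun s : ℝ => 1 + √(1 - s / lam))
        (-(1 / lam) / (2 * √(1 - s / lam))) s :=
      (((hasDerivAt_sqrt hin.ne').comp s hlin).congr_deriv (by ring)).const_add 1
    refine ((h1r'.inv (h1r s).ne').neg.sub (h1r'.log (h1r s).ne')).congr_deriv ?_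
    have := h1r s
    set r := √(1 - s / lam)
    field_simp
    ring
  have hcont : Continuous fun s : ℝ => 1 + √(1 - s / lam) := by fun_prop
  rw [integral_eq_sub_of_hasDerivAt_of_le zero_le_one
    ((hcont.continuousOn.inv₀ fun s _ => (h1r s).ne').neg.sub
      (hcont.continuousOn.log fun s _ => (h1r s).ne')) hderiv
    ((Continuous.inv₀ (by fun_prop) fun s => by have := h1r s; positivity).intervalIntegrable
      0 1)]
  norm_num
  ring

lemma intervalIntegrable_sqrt_sub_one_div_self {lam : ℝ} (hlam : 1 ≤ lam) :
    IntervalIntegrable (fun x : ℝ => √((x - 1) / x)) volume 1 lam := by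
  refine ContinuousOn.intervalIntegrable ?_
  rw [uIcc_of_le hlam]
  exact continuous_sqrt.comp_continuousOn
    (ContinuousOn.div (by fun_prop) continuousOn_id fun x hx => (one_pos.trans_le hx.1).ne')

lemma integral_sqrt_sub_one_div_self {lam : ℝ} (hlam : 1 ≤ lam) :
    ∫ x in (1 : ℝ)..lam, √((x - 1) / x)
      = lam - (1 + √(1 - 1 / lam))⁻¹ - log (1 + √(1 - 1 / lam)) - 1 / 2 * log lam := by
  have h1r : ∀ t : ℝ, 0 < 1 + √(1 - 1 / t) := fun t => by positivity
  have hne : ∀ t ∈ Icc (1 : ℝ) lam, t ≠ 0 := fun t ht => (one_pos.trans_le ht.1).ne'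
  have hderiv : ∀ t ∈ Ioo (1 : ℝ) lam, HasDerivAt (fun t : ℝ => t - (1 + √(1 - 1 / t))⁻¹
      - log (1 + √(1 - 1 / t)) - 1 / 2 * log t) (√((t - 1) / t)) t := by
    rintro t ⟨ht1, -⟩
    have ht0 : 0 < t := one_pos.trans ht1
    have hin : 0 < 1 - 1 / t := sub_pos.mpr ((div_lt_one ht0).mpr ht1)
    have hr : 0 < √(1 - 1 / t) := sqrt_pos.mpr hin
    have hlin : HasDerivAt (fun t : ℝ => 1 - 1 / t) (1 / t ^ 2) t := by
      simpa [one_div] using (hasDerivAt_inv ht0.ne').const_sub 1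
    have h1r' : HasDerivAt (fun t : ℝ => 1 + √(1 - 1 / t)) (1 / t ^ 2 / (2 * √(1 - 1 / t))) t :=
      (((hasDerivAt_sqrt hin.ne').comp t hlin).congr_deriv (by ring)).const_add 1
    refine ((((hasDerivAt_id' t).sub (h1r'.inv (h1r t).ne')).sub
      (h1r'.log (h1r t).ne')).sub ((hasDerivAt_log ht0.ne').const_mul (1 / 2))).congr_deriv ?_
    rw [show (t - 1) / t = 1 - 1 / t by field_simp]
    have hr2 : t * √(1 - 1 / t) ^ 2 = t - 1 := by rw [sq_sqrt hin.le]; field_simp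
    have := h1r t
    set r := √(1 - 1 / t)
    field_simp
    linear_combination (-r * (1 + 2 * t * (1 + r))) * hr2
  have hcont : ContinuousOn (fun t : ℝ => 1 + √(1 - 1 / t)) (Icc 1 lam) :=
    continuousOn_const.add (continuous_sqrt.comp_continuousOn
      (continuousOn_const.sub (continuousOn_const.div continuousOn_id hne)))
  rw [integral_eq_sub_of_hasDerivAt_of_le hlam
    ((((continuousOn_id.sub (hcont.inv₀ fun t _ => (h1r t).ne')).sub
      (hcont.log fun t _ => (h1r t).ne'))).sub (continuousOn_const.mul (continuousOn_id.log hne)))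
    hderiv (intervalIntegrable_sqrt_sub_one_div_self hlam)]
  norm_num

lemma integral_sqrt_sub_one_div_self_pos {lam : ℝ} (hlam : 1 < lam) :
    0 < ∫ x in (1 : ℝ)..lam, √((x - 1) / x) := by
  refine intervalIntegral_pos_of_pos_on (intervalIntegrable_sqrt_sub_one_div_self hlam.le)
    (fun x hx => sqrt_pos.mpr (div_pos ?_ ?_)) hlam <;> linarith [hx.1]

/-- (Variational inequality on `(1,∞)`.) For every `λ > 1`,
`(4/π) ∫_0^1 log(λ-x) √((1-x)/x) dx - 4λ + 2 + 4 log 2 = -4 ∫_1^λ √((x-1)/x) dx`,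
and in particular the left-hand side is strictly negative. -/
theorem stmt_11 (lam : ℝ) (hlam : 1 < lam) :
    ((4 / Real.pi) *
        (∫ x in Set.Ioo (0 : ℝ) 1, Real.log (lam - x) * Real.sqrt ((1 - x) / x)) -
        4 * lam + 2 + 4 * Real.log 2 =
      -4 * ∫ x in (1 : ℝ)..lam, Real.sqrt ((x - 1) / x)) ∧
    ((4 / Real.pi) *
        (∫ x in Set.Ioo (0 : ℝ) 1, Real.log (lam - x) * Real.sqrt ((1 - x) / x)) -
        4 * lam + 2 + 4 * Real.log 2 < 0) := by
  have hid : (4 / π) * (∫ x in Ioo (0 : ℝ) 1, log (lam - x) * √((1 - x) / x)) - 4 * lam + 2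
      + 4 * log 2 = -4 * ∫ x in (1 : ℝ)..lam, √((x - 1) / x) := by
    rw [setIntegral_log_sub_mul_sqrt_one_sub_div_self hlam,
      integral_inv_two_mul_one_add_sqrt_one_sub_div_sq hlam.le,
      integral_sqrt_sub_one_div_self hlam.le]
    field_simp
    ring
  exact ⟨hid, hid ▸ by linarith [integral_sqrt_sub_one_div_self_pos hlam]⟩
end

section
/- Let m ∈ ℕ and set n = 2m+1. Let u : ℝ → ℂ be (n+1)-times continuously differentiable and suppose there are constants C, c > 0 such that ‖u^{(k)}(t)‖ ≤ C·e^{−c t} for all t ≥ 0 and all 0 ≤ k ≤ n+1, and that u^{(k)}(0) = 0 for every odd k with k ≤ n. Then lim_{ε↓0} ∫_0^∞ K_n^ε(t) · u(t) dt = ((−1)^{m+1} / π) · ∫_0^∞ u^{(n)}(t) · t^{−1} dt, the integral on the right being absolutely convergent. -/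
/-!
For `ε > 0`, `n! (ε ± it)^{-(n+1)}` is `(±i)^n` times the `n`-th derivative of `(ε ± it)^{-1}`.
Integrating by parts `n` times on `(0, ∞)` therefore moves all derivatives onto `u`: at the
`j`-th step the boundary term at `0` vanishes because the two signs cancel when `j` is even and
`u^{(j)}(0) = 0` when `j` is odd, while exponential decay kills it at `∞`. What is left is
`((-1)^{m+1}/π) ∫ u^{(n)}(t) t/(ε² + t²) dt`. Since `t/(ε² + t²) ≤ 1/t`, dominated convergence gives
the limit, once `u^{(n)}(t)/t` is known to be integrable: near `0` this follows from
`u^{(n)}(0) = 0` and the boundedness of `u^{(n+1)}`.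
-/

open MeasureTheory

open Complex Filter Set Asymptotics Topology
open scoped Nat

theorem ContDiff.hasDerivAt_iteratedDeriv {𝕜 E : Type*} [NontriviallyNormedField 𝕜]
    [NormedAddCommGroup E] [NormedSpace 𝕜 E] {n : WithTop ℕ∞} {u : 𝕜 → E} (hu : ContDiff 𝕜 n u)
    {j : ℕ} (hj : j < n) (t : 𝕜) :
    HasDerivAt (iteratedDeriv j u) (iteratedDeriv (j + 1) u t) t := by
  rw [iteratedDeriv_succ]
  exact (hu.differentiable_iteratedDeriv j hj t).hasDerivAt

section ExpDecay

variable {c : ℝ}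

theorem integrableOn_Ioi_of_isBigO_exp_neg {E : Type*} [NormedAddCommGroup E] {f : ℝ → E}
    {a : ℝ} (hc : 0 < c) (hf : ContinuousOn f (Ici a))
    (ho : f =O[atTop] fun t => Real.exp (-c * t)) : IntegrableOn f (Ioi a) :=
  (integrableOn_Ici_iff_integrableOn_Ioi).mp <|
    (hf.locallyIntegrableOn measurableSet_Ici).integrableOn_of_isBigO_atTop ho
      ⟨Ioi c, Ioi_mem_atTop c, exp_neg_integrableOn_Ioi c hc⟩

theorem isBigO_mul_exp_neg {F f : ℝ → ℂ} (hF : F =O[atTop] (1 : ℝ → ℝ))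
    (hf : f =O[atTop] fun t => Real.exp (-c * t)) :
    (F * f) =O[atTop] fun t => Real.exp (-c * t) := by
  simpa [Pi.mul_def] using hF.mul hf

theorem integral_Ioi_mul_eq_of_hasDerivAt {F G f g : ℝ → ℂ} (hc : 0 < c)
    (hG : ∀ t, HasDerivAt G (-F t) t) (hf : ∀ t, HasDerivAt f (g t) t)
    (hF : Continuous F) (hg : Continuous g)
    (hFb : F =O[atTop] (1 : ℝ → ℝ)) (hGb : G =O[atTop] (1 : ℝ → ℝ))
    (hfd : f =O[atTop] fun t => Real.exp (-c * t))
    (hgd : g =O[atTop] fun t => Real.exp (-c * t)) (h0 : G 0 * f 0 = 0) :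
    ∫ t in Ioi 0, F t * f t = ∫ t in Ioi 0, G t * g t := by
  have hGc : Continuous G := continuous_iff_continuousAt.2 fun t => (hG t).continuousAt
  have hfc : Continuous f := continuous_iff_continuousAt.2 fun t => (hf t).continuousAt
  have hGf_zero : Tendsto (G * f) (𝓝[>] 0) (𝓝 0) :=
    h0 ▸ ((hGc.mul hfc).tendsto 0).mono_left nhdsWithin_le_nhds
  have hGf_infty : Tendsto (G * f) atTop (𝓝 0) :=
    (isBigO_mul_exp_neg hGb hfd).trans_tendsto <|
      Real.tendsto_exp_atBot.comp <| tendsto_id.const_mul_atTop_of_neg (neg_neg_iff_pos.2 hc)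
  have hFf : IntegrableOn (-F * f) (Ioi 0) :=
    integrableOn_Ioi_of_isBigO_exp_neg hc (hF.neg.mul hfc).continuousOn
      (isBigO_mul_exp_neg hFb.neg_left hfd)
  have hGg : IntegrableOn (G * g) (Ioi 0) :=
    integrableOn_Ioi_of_isBigO_exp_neg hc (hGc.mul hg).continuousOn (isBigO_mul_exp_neg hGb hgd)
  have := integral_Ioi_mul_deriv_eq_deriv_mul (fun t _ => hG t) (fun t _ => hf t) hGg hFf
    hGf_zero hGf_infty
  simp only [neg_mul, integral_neg, sub_neg_eq_add, zero_sub] at this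
  linear_combination -this

theorem integral_Ioi_mul_eq_integral_mul_iteratedDeriv {n : ℕ} {F : ℕ → ℝ → ℂ} {u : ℝ → ℂ}
    (hc : 0 < c) (hu : ContDiff ℝ n u)
    (hdecay : ∀ j ≤ n, iteratedDeriv j u =O[atTop] fun t => Real.exp (-c * t))
    (hF : ∀ j < n, ∀ t, HasDerivAt (F (j + 1)) (-F j t) t)
    (hFc : ∀ j ≤ n, Continuous (F j)) (hFb : ∀ j ≤ n, F j =O[atTop] (1 : ℝ → ℝ))
    (h0 : ∀ j < n, F (j + 1) 0 * iteratedDeriv j u 0 = 0) :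
    ∫ t in Ioi 0, F 0 t * u t = ∫ t in Ioi 0, F n t * iteratedDeriv n u t := by
  suffices ∀ j ≤ n, ∫ t in Ioi 0, F 0 t * u t = ∫ t in Ioi 0, F j t * iteratedDeriv j u t from
    this n le_rfl
  intro j hj
  induction j with
  | zero => simp
  | succ j ih =>
    have hjn : j < n := hj
    refine (ih hjn.le).trans <| integral_Ioi_mul_eq_of_hasDerivAt hc (hF j hjn)
      (hu.hasDerivAt_iteratedDeriv (by exact_mod_cast hjn))
      (hFc j hjn.le) (hu.continuous_iteratedDeriv _ (by exact_mod_cast hj)) (hFb j hjn.le)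
      (hFb _ hj) (hdecay j hjn.le) (hdecay _ hj) (h0 j hjn)

end ExpDecay

section IbpKernel

variable {ε : ℝ} {σ : ℂ}

theorem abs_le_norm_ofReal_add_mul (hσ : σ.re = 0) (t : ℝ) : |ε| ≤ ‖(ε : ℂ) + σ * t‖ := by
  simpa [hσ] using abs_re_le_norm ((ε : ℂ) + σ * t)

theorem ofReal_add_mul_ne_zero (hε : ε ≠ 0) (hσ : σ.re = 0) (t : ℝ) : (ε : ℂ) + σ * t ≠ 0 :=
  norm_pos_iff.1 <| (abs_pos.2 hε).trans_le (abs_le_norm_ofReal_add_mul hσ t)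

theorem norm_zpow_neg_ofReal_add_mul_le (hε : 0 < ε) (hσ : σ.re = 0) (k : ℕ) (t : ℝ) :
    ‖((ε : ℂ) + σ * t) ^ (-(k : ℤ))‖ ≤ (ε ^ k)⁻¹ := by
  rw [norm_zpow, zpow_neg, zpow_natCast]
  gcongr
  simpa [abs_of_pos hε] using abs_le_norm_ofReal_add_mul (ε := ε) hσ t

theorem continuous_zpow_ofReal_add_mul (hε : ε ≠ 0) (hσ : σ.re = 0) (k : ℤ) :
    Continuous fun t : ℝ => ((ε : ℂ) + σ * t) ^ k :=
  (by fun_prop : Continuous fun t : ℝ => (ε : ℂ) + σ * t).zpow₀ k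
    fun t => .inl (ofReal_add_mul_ne_zero hε hσ t)

theorem hasDerivAt_zpow_neg_ofReal_add_mul (hε : ε ≠ 0) (hσ : σ.re = 0) (k : ℕ) (t : ℝ) :
    HasDerivAt (fun t : ℝ => ((ε : ℂ) + σ * t) ^ (-(k : ℤ)))
      (-k * σ * ((ε : ℂ) + σ * t) ^ (-((k + 1 : ℕ) : ℤ))) t := by
  have hlin : HasDerivAt (fun z : ℂ => (ε : ℂ) + σ * z) σ t := by
    simpa using ((hasDerivAt_id (t : ℂ)).const_mul σ).const_add (ε : ℂ)
  have := ((hasDerivAt_zpow (-(k : ℤ)) _ (.inl (ofReal_add_mul_ne_zero hε hσ t))).comp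
    (t : ℂ) hlin).comp_ofReal
  refine this.congr_deriv ?_
  rw [show -((k + 1 : ℕ) : ℤ) = -k - 1 by push_cast; ring]
  push_cast
  ring

noncomputable def ibpTerm (σ : ℂ) (ε : ℝ) (k j : ℕ) (t : ℝ) : ℂ :=
  k ! * (-σ) ^ j * ((ε : ℂ) + σ * t) ^ (-((k + 1 : ℕ) : ℤ))

theorem hasDerivAt_ibpTerm (hε : ε ≠ 0) (hσ : σ = I ∨ σ = -I) (k j : ℕ) (t : ℝ) :
    HasDerivAt (ibpTerm σ ε k (j + 1)) (-ibpTerm σ ε (k + 1) j t) t := by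
  have hre : σ.re = 0 := by rcases hσ with rfl | rfl <;> simp
  have hsq : σ ^ 2 = -1 := by rcases hσ with rfl | rfl <;> simp
  -- the chain-rule factor `σ` is absorbed by `(-σ) ^ (j + 1) * σ = (-σ) ^ j`, as `σ ^ 2 = -1`
  refine ((hasDerivAt_zpow_neg_ofReal_add_mul hε hre (k + 1) t).const_mul
    ((k ! : ℂ) * (-σ) ^ (j + 1))).congr_deriv ?_
  simp only [ibpTerm]
  set z := ((ε : ℂ) + σ * t) ^ (-((k + 1 + 1 : ℕ) : ℤ))
  push_cast [Nat.factorial_succ]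
  linear_combination ((k + 1) * k ! * (-σ) ^ j * z) * hsq

theorem continuous_ibpTerm (hε : ε ≠ 0) (hσ : σ.re = 0) (k j : ℕ) :
    Continuous (ibpTerm σ ε k j) :=
  continuous_const.mul (continuous_zpow_ofReal_add_mul hε hσ _)

theorem norm_ibpTerm_le (hε : 0 < ε) (hσ : ‖σ‖ = 1) (hre : σ.re = 0) (k j : ℕ) (t : ℝ) :
    ‖ibpTerm σ ε k j t‖ ≤ k ! * (ε ^ (k + 1))⁻¹ := by
  rw [ibpTerm, norm_mul, norm_mul, norm_pow, norm_neg, hσ, one_pow, mul_one, Complex.norm_natCast]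
  exact mul_le_mul_of_nonneg_left (norm_zpow_neg_ofReal_add_mul_le hε hre _ t) (by positivity)

/-- The kernel `2π K_n^ε` after `j` integrations by parts. -/
noncomputable def ibpKernel (ε : ℝ) (n j : ℕ) (t : ℝ) : ℂ :=
  ibpTerm I ε (n - j) j t + ibpTerm (-I) ε (n - j) j t

variable {n j : ℕ}

theorem hasDerivAt_ibpKernel (hε : ε ≠ 0) (hj : j < n) (t : ℝ) :
    HasDerivAt (ibpKernel ε n (j + 1)) (-ibpKernel ε n j t) t := by
  obtain ⟨k, rfl⟩ := Nat.exists_eq_add_of_lt hj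
  have hfun : ibpKernel ε (j + k + 1) (j + 1) =
      ibpTerm I ε k (j + 1) + ibpTerm (-I) ε k (j + 1) := by
    ext s; simp [ibpKernel]
  have hk : j + k + 1 - j = k + 1 := by omega
  rw [hfun, ibpKernel, hk, neg_add]
  exact (hasDerivAt_ibpTerm hε (.inl rfl) k j t).add (hasDerivAt_ibpTerm hε (.inr rfl) k j t)

theorem continuous_ibpKernel (hε : ε ≠ 0) : Continuous (ibpKernel ε n j) :=
  (continuous_ibpTerm hε (by simp) _ _).add (continuous_ibpTerm hε (by simp) _ _)

theorem isBigO_ibpKernel_one (hε : 0 < ε) : ibpKernel ε n j =O[atTop] (1 : ℝ → ℝ) := by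
  refine .of_bound (2 * ((n - j) ! * (ε ^ (n - j + 1))⁻¹)) (.of_forall fun t => ?_)
  rw [Pi.one_apply, norm_one, mul_one, two_mul]
  exact (norm_add_le _ _).trans (add_le_add (norm_ibpTerm_le hε (by simp) (by simp) _ _ t)
    (norm_ibpTerm_le hε (by simp) (by simp) _ _ t))

theorem ibpKernel_apply_zero_of_odd (hj : Odd j) : ibpKernel ε n j 0 = 0 := by
  simp [ibpKernel, ibpTerm, hj.neg_pow]

theorem K_natCast_eq (ε t : ℝ) (n : ℕ) :
    K n ε t = (2 * Real.pi : ℂ)⁻¹ * ibpKernel ε n 0 t := by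
  have hexp : -((n : ℂ) + 1) = ((-((n + 1 : ℕ) : ℤ) : ℤ) : ℂ) := by push_cast; ring
  simp only [K, ibpKernel, ibpTerm, add_comm (1 : ℂ), Gamma_nat_eq_factorial, hexp, cpow_intCast,
    sub_eq_add_neg, ← neg_mul, Nat.sub_zero, pow_zero, mul_one]
  ring

theorem ibpKernel_self_of_odd (hε : 0 < ε) (m : ℕ) (t : ℝ) :
    ibpKernel ε (2 * m + 1) (2 * m + 1) t =
      2 * (-1) ^ (m + 1) * ((t / (ε ^ 2 + t ^ 2) : ℝ) : ℂ) := by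
  have hden : ((ε : ℂ) + I * t) * ((ε : ℂ) + -I * t) = ((ε ^ 2 + t ^ 2 : ℝ) : ℂ) := by
    push_cast; ring_nf; rw [I_sq]; ring
  have hplus := ofReal_add_mul_ne_zero hε.ne' (σ := I) (by simp) t
  have hminus := ofReal_add_mul_ne_zero hε.ne' (σ := -I) (by simp) t
  have hI : I ^ (2 * m + 1) = (-1) ^ m * I := by rw [pow_succ, pow_mul, I_sq]
  simp only [ibpKernel, ibpTerm, Nat.sub_self, Nat.factorial_zero, zero_add, Nat.cast_one,
    one_mul, zpow_neg_one, neg_neg, (odd_two_mul_add_one m).neg_pow, hI]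
  rw [ofReal_div, ← hden]
  simp only [neg_mul, ← sub_eq_add_neg] at hminus ⊢
  field_simp
  linear_combination (2 * (-1) ^ m * (t : ℂ)) * I_sq

end IbpKernel

theorem integrableOn_Ioi_mul_inv_of_hasDerivAt {f g : ℝ → ℂ} {B : ℝ}
    (hf : ∀ t, HasDerivAt f (g t) t) (hf0 : f 0 = 0) (hg : ∀ t ∈ Icc (0 : ℝ) 1, ‖g t‖ ≤ B)
    (hf1 : IntegrableOn f (Ioi 1)) :
    IntegrableOn (fun t : ℝ => f t * (t : ℂ)⁻¹) (Ioi 0) := by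
  have hfc : Continuous f := continuous_iff_continuousAt.2 fun t => (hf t).continuousAt
  have hmeas : AEStronglyMeasurable (fun t : ℝ => f t * (t : ℂ)⁻¹) :=
    hfc.aestronglyMeasurable.mul
      (by fun_prop : Measurable fun t : ℝ => (t : ℂ)⁻¹).aestronglyMeasurable
  rw [← Ioc_union_Ioi_eq_Ioi zero_le_one]
  refine .union ?_ ?_
  · refine Measure.integrableOn_of_bounded (M := B) (by simp) hmeas ?_
    filter_upwards [ae_restrict_mem measurableSet_Ioc] with t ⟨ht0, ht1⟩
    have hlip := norm_image_sub_le_of_norm_deriv_le_segment' (f := f) (a := 0) (b := t)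
      (fun s _ => (hf s).hasDerivWithinAt) (fun s hs => hg s ⟨hs.1, hs.2.le.trans ht1⟩) t
      ⟨ht0.le, le_rfl⟩
    rw [hf0, sub_zero, sub_zero] at hlip
    rw [norm_mul, norm_inv, norm_real, Real.norm_of_nonneg ht0.le]
    exact (mul_inv_le_iff₀ ht0).2 hlip
  · refine Integrable.mono hf1 hmeas.restrict ?_
    filter_upwards [ae_restrict_mem measurableSet_Ioi] with t (ht : 1 < t)
    rw [norm_mul, norm_inv, norm_real, Real.norm_of_nonneg (by positivity : (0:ℝ) ≤ t)]
    exact mul_le_of_le_one_right (norm_nonneg _) (inv_le_one_of_one_le₀ ht.le)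

theorem tendsto_integral_mul_div_sq_add_sq {f : ℝ → ℂ}
    (hf : AEStronglyMeasurable f (volume.restrict (Ioi 0)))
    (hfi : IntegrableOn (fun t : ℝ => f t * (t : ℂ)⁻¹) (Ioi 0)) :
    Tendsto (fun ε : ℝ => ∫ t in Ioi 0, f t * ((t / (ε ^ 2 + t ^ 2) : ℝ) : ℂ)) (𝓝 0)
      (𝓝 (∫ t in Ioi 0, f t * (t : ℂ)⁻¹)) := by
  refine tendsto_integral_filter_of_dominated_convergence (fun t => ‖f t * (t : ℂ)⁻¹‖)
    (.of_forall fun ε => hf.mul (by fun_prop : Measurable fun t : ℝ =>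
      ((t / (ε ^ 2 + t ^ 2) : ℝ) : ℂ)).aestronglyMeasurable)
    (.of_forall fun ε => ?_) hfi.norm ?_
  · filter_upwards [ae_restrict_mem measurableSet_Ioi] with t (ht : 0 < t)
    rw [norm_mul, norm_mul, norm_inv, norm_real, norm_real, Real.norm_of_nonneg ht.le,
      Real.norm_of_nonneg (by positivity)]
    gcongr
    rw [div_le_iff₀ (by positivity)]
    field_simp
    nlinarith [sq_nonneg ε]
  · filter_upwards [ae_restrict_mem measurableSet_Ioi] with t (ht : 0 < t)
    have hcont : ContinuousAt (fun ε : ℝ => t / (ε ^ 2 + t ^ 2)) 0 :=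
      continuousAt_const.div (by fun_prop) (by positivity)
    have hval : t / ((0 : ℝ) ^ 2 + t ^ 2) = t⁻¹ := by field_simp; ring
    rw [← ofReal_inv, ← hval]
    exact ((continuous_ofReal.tendsto _).comp hcont.tendsto).const_mul (f t)

theorem integral_K_mul_eq {ε c : ℝ} (hε : 0 < ε) (hc : 0 < c) {m : ℕ} {u : ℝ → ℂ}
    (hu : ContDiff ℝ (2 * m + 1 : ℕ) u)
    (hdecay : ∀ j ≤ 2 * m + 1, iteratedDeriv j u =O[atTop] fun t => Real.exp (-c * t))
    (hodd : ∀ j, Odd j → j < 2 * m + 1 → iteratedDeriv j u 0 = 0) :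
    ∫ t in Ioi 0, K (2 * m + 1 : ℕ) ε t * u t =
      (-1) ^ (m + 1) / Real.pi * ∫ t in Ioi 0,
        iteratedDeriv (2 * m + 1) u t * ((t / (ε ^ 2 + t ^ 2) : ℝ) : ℂ) := by
  have hbdry : ∀ j < 2 * m + 1, ibpKernel ε (2 * m + 1) (j + 1) 0 * iteratedDeriv j u 0 = 0 := by
    intro j hj
    rcases Nat.even_or_odd j with heven | hj'
    · rw [ibpKernel_apply_zero_of_odd heven.add_one, zero_mul]
    · rw [hodd j hj' hj, mul_zero]
  have hibp := integral_Ioi_mul_eq_integral_mul_iteratedDeriv (F := ibpKernel ε (2 * m + 1))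
    hc hu hdecay (fun _ hj => hasDerivAt_ibpKernel hε.ne' hj)
    (fun _ _ => continuous_ibpKernel hε.ne') (fun _ _ => isBigO_ibpKernel_one hε) hbdry
  calc ∫ t in Ioi 0, K (2 * m + 1 : ℕ) ε t * u t
      = (2 * Real.pi : ℂ)⁻¹ * ∫ t in Ioi 0, ibpKernel ε (2 * m + 1) 0 t * u t := by
        simp only [K_natCast_eq, mul_assoc, integral_const_mul]
    _ = (2 * Real.pi : ℂ)⁻¹ * ∫ t in Ioi 0, 2 * (-1) ^ (m + 1) *
          (iteratedDeriv (2 * m + 1) u t * ((t / (ε ^ 2 + t ^ 2) : ℝ) : ℂ)) := by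
        simp only [hibp, ibpKernel_self_of_odd hε]
        congr 1
        exact integral_congr_ae (.of_forall fun t => by ring)
    _ = _ := by
        rw [integral_const_mul]
        field_simp

/-- Let `n = 2m+1` and let `u : ℝ → ℂ` be `(n+1)`-times continuously
differentiable with all derivatives of order `≤ n+1` exponentially decaying on `[0,∞)`,
and with `u^{(k)}(0) = 0` for every odd `k ≤ n`. Then
`lim_{ε↓0} ∫_0^∞ K_n^ε(t) u(t) dt = ((-1)^{m+1}/π) ∫_0^∞ u^{(n)}(t) t^{-1} dt`,
the integral on the right being absolutely convergent. -/
theorem stmt_13 (m : ℕ) (u : ℝ → ℂ) (hu : ContDiff ℝ (2 * m + 2 : ℕ) u)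
    (C c : ℝ) (hC : 0 < C) (hc : 0 < c)
    (hbound : ∀ k ≤ 2 * m + 2, ∀ t : ℝ, 0 ≤ t →
      ‖iteratedDeriv k u t‖ ≤ C * Real.exp (-c * t))
    (hodd : ∀ k, Odd k → k ≤ 2 * m + 1 → iteratedDeriv k u 0 = 0) :
    IntegrableOn (fun t : ℝ => iteratedDeriv (2 * m + 1) u t * (t : ℂ)⁻¹)
      (Set.Ioi (0 : ℝ)) ∧
    Filter.Tendsto
      (fun ε : ℝ => ∫ t in Set.Ioi (0 : ℝ), K ((2 * m + 1 : ℕ) : ℂ) ε t * u t)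
      (nhdsWithin 0 (Set.Ioi 0))
      (nhds (((-1 : ℂ) ^ (m + 1) / (Real.pi : ℂ)) *
        ∫ t in Set.Ioi (0 : ℝ), iteratedDeriv (2 * m + 1) u t * (t : ℂ)⁻¹)) := by
  have hdecay : ∀ k ≤ 2 * m + 2, iteratedDeriv k u =O[atTop] fun t => Real.exp (-c * t) :=
    fun k hk => .of_bound C <| (eventually_ge_atTop 0).mono fun t ht => by
      simpa [Real.norm_of_nonneg (Real.exp_pos _).le] using hbound k hk t ht
  have hcont : Continuous (iteratedDeriv (2 * m + 1) u) :=
    hu.continuous_iteratedDeriv _ (by exact_mod_cast (2 * m + 1).le_succ)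
  have hint :
      IntegrableOn (fun t : ℝ => iteratedDeriv (2 * m + 1) u t * (t : ℂ)⁻¹) (Ioi 0) :=
    integrableOn_Ioi_mul_inv_of_hasDerivAt
      (hu.hasDerivAt_iteratedDeriv (by exact_mod_cast (2 * m + 1).lt_succ_self))
      (hodd _ (odd_two_mul_add_one m) le_rfl)
      (fun t ht => (hbound _ le_rfl t ht.1).trans <|
        mul_le_of_le_one_right hC.le <| Real.exp_le_one_iff.2 <| by nlinarith [ht.1])
      ((integrableOn_Ioi_of_isBigO_exp_neg hc hcont.continuousOn (hdecay _ (by omega))).mono_set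
        (Ioi_subset_Ioi zero_le_one))
  refine ⟨hint, ?_⟩
  refine (((tendsto_integral_mul_div_sq_add_sq hcont.aestronglyMeasurable hint).mono_left
    nhdsWithin_le_nhds).const_mul _).congr' ?_
  filter_upwards [self_mem_nhdsWithin] with ε hε
  exact (integral_K_mul_eq hε hc (hu.of_le (by exact_mod_cast (2 * m + 1).le_succ))
    (fun j hj => hdecay j (by omega)) (fun j hj hjn => hodd j hj hjn.le)).symm
end

section
/- Let M ∈ ℕ and let h ∈ ℂ satisfy 2M < Re(2h) < 2M+2. Let u : ℝ → ℂ be (2M+1)-times continuously differentiable and suppose: (i) there are constants C, c > 0 with ‖u^{(k)}(t)‖ ≤ C·e^{−c t} for all t ≥ 0 and all 0 ≤ k ≤ 2M+1; (ii) u^{(k)}(0) = 0 for every odd k with k ≤ 2M−1; (iii) the function t ↦ ‖u^{(2M+1)}(t)‖ · t^{2M−Re(2h)} is integrable on (0,∞). Then lim_{ε↓0} ∫_0^∞ K_{2h}^ε(t) · u(t) dt = −(sin(πh)/π) · Γ(2h−2M) · ∫_0^∞ u^{(2M+1)}(t) · t^{−(2h−2M)} dt, where t^{−(2h−2M)} is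 the principal complex power of the positive real t and sin is the complex sine. -/
/-!
Put `k_n(t) = (ε + it)^{-(w-n+1)} + (-1)^n (ε - it)^{-(w-n+1)}`, so that
`K_w^ε = Γ(1+w)/(2π) k_0` and `k_{n+1}' = -i(w-n) k_n`. Integrating by parts `2M+1` times
moves every derivative onto `u`; the boundary terms `k_{n+1}(0) u^{(n)}(0)` vanish since
`k_{n+1}(0) = 0` for even `n` and `u^{(n)}(0) = 0` for odd `n`. With `q = w - 2M`, the kernel
`k_{2M+1}` is dominated by `2 e^{π|Im q|/2} t^{-Re q}` uniformly in `ε`, so dominated convergence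
lets `ε → 0`, where `(it)^{-q} - (-it)^{-q} = -2i sin(πq/2) t^{-q}`. The constant collapses
through `Γ(w+1) = Γ(w-2M) ∏_{j ≤ 2M} (w-j)`.
-/

open MeasureTheory

open Set Filter Topology Complex
open scoped Real

lemma norm_cpow_neg_le {z r : ℂ} {a : ℝ} (ha : 0 < a) (haz : a ≤ ‖z‖) (hz : 0 ≤ z.re)
    (hr : 0 ≤ r.re) : ‖z ^ (-r)‖ ≤ a ^ (-r.re) * Real.exp (π / 2 * |r.im|) := by
  have hz0 : z ≠ 0 := norm_pos_iff.mp (ha.trans_le haz)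
  rw [norm_cpow_of_ne_zero hz0, neg_re, neg_im, mul_neg, Real.exp_neg, div_inv_eq_mul]
  refine mul_le_mul (Real.rpow_le_rpow_of_nonpos ha haz (neg_nonpos.2 hr)) ?_ (by positivity)
    (by positivity)
  refine Real.exp_le_exp.2 ?_
  calc z.arg * r.im ≤ |z.arg| * |r.im| := by rw [← abs_mul]; exact le_abs_self _
    _ ≤ π / 2 * |r.im| := by gcongr; exact abs_arg_le_pi_div_two_iff.2 hz

lemma ofReal_mul_cpow {r : ℝ} (hr : 0 < r) {x : ℂ} (hx : x ≠ 0) (s : ℂ) :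
    ((r : ℂ) * x) ^ s = (r : ℂ) ^ s * x ^ s := by
  have hr' : (r : ℂ) ≠ 0 := ofReal_ne_zero.2 hr.ne'
  rw [cpow_def_of_ne_zero (mul_ne_zero hr' hx), cpow_def_of_ne_zero hr', cpow_def_of_ne_zero hx,
    log_ofReal_mul hr hx, ofReal_log hr.le, add_mul, Complex.exp_add]

lemma I_mul_ofReal_cpow_sub {t : ℝ} (ht : 0 < t) (s : ℂ) :
    (I * t) ^ s - (-I * t) ^ s = 2 * I * sin (π / 2 * s) * (t : ℂ) ^ s := by
  rw [mul_comm I, mul_comm (-I), ofReal_mul_cpow ht I_ne_zero,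
    ofReal_mul_cpow ht (neg_ne_zero.2 I_ne_zero), cpow_def_of_ne_zero I_ne_zero,
    cpow_def_of_ne_zero (neg_ne_zero.2 I_ne_zero), log_I, log_neg_I, sin]
  rw [show (π / 2 * I * s : ℂ) = π / 2 * s * I by ring,
    show (-(π / 2) * I * s : ℂ) = -(π / 2 * s) * I by ring]
  linear_combination (-(t : ℂ) ^ s * (exp (-(π / 2 * s) * I) -
    exp (π / 2 * s * I))) * I_mul_I

lemma ofReal_add_I_mul_mem_slitPlane {ε t : ℝ} (h : 0 < ε ∨ t ≠ 0) :
    (ε : ℂ) + I * t ∈ slitPlane := by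
  simpa [mem_slitPlane_iff] using h

lemma ofReal_sub_I_mul_mem_slitPlane {ε t : ℝ} (h : 0 < ε ∨ t ≠ 0) :
    (ε : ℂ) - I * t ∈ slitPlane := by
  simpa [mem_slitPlane_iff] using h

-- `kernelPrimitive w ε n` is the kernel `k_n` above.
noncomputable def kernelPrimitive (w : ℂ) (ε : ℝ) (n : ℕ) (t : ℝ) : ℂ :=
  ((ε : ℂ) + I * t) ^ (-(w - n + 1)) + (-1) ^ n * ((ε : ℂ) - I * t) ^ (-(w - n + 1))

lemma K_eq_kernelPrimitive_zero (w : ℂ) (ε t : ℝ) :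
    K w ε t = Gamma (1 + w) / (2 * π) * kernelPrimitive w ε 0 t := by
  simp [K, kernelPrimitive, add_comm]

section kernelPrimitive

variable {w : ℂ} {ε t : ℝ} {n : ℕ}

lemma kernelPrimitive_zero_of_odd (hn : Odd n) (ht : 0 < t) :
    kernelPrimitive w 0 n t =
      -2 * I * sin (π / 2 * (w - n + 1)) * (t : ℂ) ^ (-(w - n + 1)) := by
  rw [kernelPrimitive, hn.neg_one_pow, show -2 * I * sin (π / 2 * (w - n + 1)) =
    2 * I * sin (π / 2 * -(w - n + 1)) by rw [mul_neg, sin_neg]; ring,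
    ← I_mul_ofReal_cpow_sub ht]
  simp only [ofReal_zero, zero_add, neg_mul, one_mul, sub_eq_add_neg]

lemma kernelPrimitive_succ_zero_of_even (hn : Even n) : kernelPrimitive w ε (n + 1) 0 = 0 := by
  rw [kernelPrimitive, hn.add_one.neg_one_pow]
  simp

lemma norm_kernelPrimitive_le {a : ℝ} (hε : 0 ≤ ε) (ha : 0 < a)
    (hat : a ≤ ‖(ε : ℂ) + I * t‖) (hw : 0 ≤ (w - n + 1).re) :
    ‖kernelPrimitive w ε n t‖ ≤
      2 * (a ^ (-(w - n + 1).re) * Real.exp (π / 2 * |(w - n + 1).im|)) := by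
  have hconj : (ε : ℂ) - I * t = (starRingEnd ℂ) ((ε : ℂ) + I * t) := by
    simp [conj_ofReal, sub_eq_add_neg]
  have h₁ := norm_cpow_neg_le ha hat (by simpa using hε) hw
  have h₂ := norm_cpow_neg_le ha (hat.trans_eq (norm_conj _).symm) (by simpa [hconj] using hε) hw
  rw [← hconj] at h₂
  calc ‖kernelPrimitive w ε n t‖
      ≤ ‖((ε : ℂ) + I * t) ^ (-(w - n + 1))‖ +
          ‖((ε : ℂ) - I * t) ^ (-(w - n + 1))‖ := by
        refine (norm_add_le _ _).trans_eq ?_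
        rw [norm_mul, norm_pow, norm_neg, norm_one, one_pow, one_mul]
    _ ≤ _ := by linarith

lemma norm_kernelPrimitive_le_eps (hε : 0 < ε) (hw : 0 ≤ (w - n + 1).re) :
    ‖kernelPrimitive w ε n t‖ ≤
      2 * (ε ^ (-(w - n + 1).re) * Real.exp (π / 2 * |(w - n + 1).im|)) :=
  norm_kernelPrimitive_le hε.le hε (by simpa using re_le_norm ((ε : ℂ) + I * t)) hw

lemma norm_kernelPrimitive_le_rpow (hε : 0 ≤ ε) (ht : 0 < t) (hw : 0 ≤ (w - n + 1).re) :
    ‖kernelPrimitive w ε n t‖ ≤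
      2 * (t ^ (-(w - n + 1).re) * Real.exp (π / 2 * |(w - n + 1).im|)) :=
  norm_kernelPrimitive_le hε ht
    (by simpa [abs_of_pos ht] using abs_im_le_norm ((ε : ℂ) + I * t)) hw

lemma continuousAt_kernelPrimitive {p : ℝ × ℝ} (hp : 0 < p.1 ∨ p.2 ≠ 0) :
    ContinuousAt (fun p : ℝ × ℝ => kernelPrimitive w p.1 n p.2) p := by
  have h₁ : ContinuousAt (fun p : ℝ × ℝ => ((p.1 : ℂ) + I * p.2) ^ (-(w - n + 1))) p :=
    (by fun_prop : ContinuousAt (fun p : ℝ × ℝ => (p.1 : ℂ) + I * p.2) p).cpow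
      continuousAt_const (ofReal_add_I_mul_mem_slitPlane hp)
  have h₂ : ContinuousAt (fun p : ℝ × ℝ => ((p.1 : ℂ) - I * p.2) ^ (-(w - n + 1))) p :=
    (by fun_prop : ContinuousAt (fun p : ℝ × ℝ => (p.1 : ℂ) - I * p.2) p).cpow
      continuousAt_const (ofReal_sub_I_mul_mem_slitPlane hp)
  exact h₁.add (continuousAt_const.mul h₂)

lemma continuous_kernelPrimitive (hε : 0 < ε) : Continuous (kernelPrimitive w ε n) :=
  continuous_iff_continuousAt.2 fun t =>
    (continuousAt_kernelPrimitive (Or.inl hε)).comp (f := fun t : ℝ => (ε, t)) (by fun_prop)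

lemma hasDerivAt_kernelPrimitive_succ (hε : 0 < ε) (t : ℝ) :
    HasDerivAt (kernelPrimitive w ε (n + 1)) (-I * (w - n) * kernelPrimitive w ε n t) t := by
  have hline : ∀ c : ℂ, HasDerivAt (fun z : ℂ => (ε : ℂ) + c * z) c t := fun c => by
    simpa using ((hasDerivAt_id (t : ℂ)).const_mul c).const_add (ε : ℂ)
  have h₁ := ((hline I).cpow_const (c := -(w - n))
    (ofReal_add_I_mul_mem_slitPlane (Or.inl hε))).comp_ofReal
  have h₂ := ((hline (-I)).cpow_const (c := -(w - n))
    (by simpa [← sub_eq_add_neg] using ofReal_sub_I_mul_mem_slitPlane (Or.inl hε))).comp_ofReal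
  have hfun : kernelPrimitive w ε (n + 1) = fun s : ℝ =>
      ((ε : ℂ) + I * s) ^ (-(w - n)) + (-1) ^ (n + 1) * ((ε : ℂ) + -I * s) ^ (-(w - n)) := by
    ext s
    rw [kernelPrimitive]
    push_cast
    ring_nf
  rw [hfun]
  refine (h₁.fun_add (h₂.const_mul ((-1) ^ (n + 1)))).congr_deriv ?_
  rw [kernelPrimitive, pow_succ, show -(w - n) - 1 = -(w - n + 1) by ring,
    sub_eq_add_neg (ε : ℂ), ← neg_mul]
  ring

end kernelPrimitive

lemma integrableOn_Ioi_of_norm_le_exp {E : Type*} [NormedAddCommGroup E] {v : ℝ → E} {C c : ℝ}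
    (hv : Continuous v) (hc : 0 < c) (hb : ∀ t, 0 ≤ t → ‖v t‖ ≤ C * Real.exp (-c * t)) :
    IntegrableOn v (Ioi 0) := by
  refine Integrable.mono' ((exp_neg_integrableOn_Ioi 0 hc).const_mul C)
    hv.aestronglyMeasurable ?_
  filter_upwards [ae_restrict_mem measurableSet_Ioi] with t ht using hb t (le_of_lt ht)

section integral

variable {w : ℂ} {ε : ℝ} {n : ℕ} {v v' : ℝ → ℂ}

lemma integrableOn_kernelPrimitive_mul (hε : 0 < ε) (hw : 0 ≤ (w - n + 1).re)
    (hv : IntegrableOn v (Ioi 0)) :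
    IntegrableOn (fun t => kernelPrimitive w ε n t * v t) (Ioi 0) :=
  hv.bdd_mul (continuous_kernelPrimitive hε).aestronglyMeasurable
    (ae_of_all _ fun _ => norm_kernelPrimitive_le_eps hε hw)

theorem integral_kernelPrimitive_mul (hε : 0 < ε) (hwn : 0 < (w - n).re)
    (hv : ∀ t ∈ Ici (0 : ℝ), HasDerivAt v (v' t) t) (hvi : IntegrableOn v (Ioi 0))
    (hv'i : IntegrableOn v' (Ioi 0)) (hbdry : Even n ∨ v 0 = 0) :
    ∫ t in Ioi 0, kernelPrimitive w ε n t * v t =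
      -I / (w - n) * ∫ t in Ioi 0, kernelPrimitive w ε (n + 1) t * v' t := by
  have hw₀ : 0 ≤ (w - n + 1).re := by simp at hwn ⊢; linarith
  have hw₁ : 0 ≤ (w - (n + 1 : ℕ) + 1).re := by simp at hwn ⊢; linarith
  have hwn0 : w - n ≠ 0 := fun h => by simp [h] at hwn
  have hk : ∀ t, HasDerivAt (kernelPrimitive w ε (n + 1))
      (-I * (w - n) * kernelPrimitive w ε n t) t :=
    hasDerivAt_kernelPrimitive_succ hε
  have hzero : Tendsto (kernelPrimitive w ε (n + 1) * v) (𝓝[>] 0) (𝓝 0) := by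
    have hcont : ContinuousAt (kernelPrimitive w ε (n + 1) * v) 0 :=
      (hk 0).continuousAt.mul (hv 0 self_mem_Ici).continuousAt
    have h0 : (kernelPrimitive w ε (n + 1) * v) 0 = 0 := by
      rcases hbdry with hn | hv0
      · simp [kernelPrimitive_succ_zero_of_even hn]
      · simp [hv0]
    simpa [h0] using hcont.tendsto.mono_left nhdsWithin_le_nhds
  have hinfty : Tendsto (kernelPrimitive w ε (n + 1) * v) atTop (𝓝 0) := by
    have hv0 : Tendsto v atTop (𝓝 0) := tendsto_zero_of_hasDerivAt_of_integrableOn_Ioi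
      (fun t ht => hv t (mem_Ici_of_Ioi ht)) hv'i hvi
    refine isBoundedUnder_le_mul_tendsto_zero ⟨_, eventually_map.2 <| Eventually.of_forall
      fun t => norm_kernelPrimitive_le_eps hε hw₁ (t := t)⟩ hv0
  have hibp := integral_Ioi_mul_deriv_eq_deriv_mul (fun t _ => hk t)
    (fun t ht => hv t (mem_Ici_of_Ioi ht)) (integrableOn_kernelPrimitive_mul hε hw₁ hv'i)
    (by simpa only [IntegrableOn, Pi.mul_def, mul_assoc] using
      (integrableOn_kernelPrimitive_mul hε hw₀ hvi).const_mul (-I * (w - n)))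
    hzero hinfty
  simp only [mul_assoc, integral_const_mul, neg_zero, zero_sub] at hibp
  rw [hibp]
  field_simp
  ring_nf
  rw [I_sq]
  ring

theorem integral_kernelPrimitive_mul_eq_prod {u : ℝ → ℂ} {N : ℕ} (hε : 0 < ε)
    (hu : ContDiff ℝ N u) (hwN : (N : ℝ) < w.re + 1)
    (hint : ∀ k ≤ N, IntegrableOn (iteratedDeriv k u) (Ioi 0))
    (hodd : ∀ k < N, Odd k → iteratedDeriv k u 0 = 0) :
    ∫ t in Ioi 0, kernelPrimitive w ε 0 t * u t =
      (∏ j ∈ Finset.range N, (-I / (w - j))) *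
        ∫ t in Ioi 0, kernelPrimitive w ε N t * iteratedDeriv N u t := by
  suffices ∀ m ≤ N, ∫ t in Ioi 0, kernelPrimitive w ε 0 t * u t =
      (∏ j ∈ Finset.range m, (-I / (w - j))) *
        ∫ t in Ioi 0, kernelPrimitive w ε m t * iteratedDeriv m u t from this N le_rfl
  intro m hm
  induction m with
  | zero => simp
  | succ m ih =>
    have hmN : m < N := hm
    have hderiv : ∀ t, HasDerivAt (iteratedDeriv m u) (iteratedDeriv (m + 1) u t) t := fun t => by
      rw [iteratedDeriv_succ]
      exact ((hu.differentiable_iteratedDeriv m (by exact_mod_cast hmN)) t).hasDerivAt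
    have hwm : 0 < (w - m).re := by
      have : (m : ℝ) + 1 ≤ N := by exact_mod_cast hmN
      simp only [sub_re, natCast_re]; linarith
    rw [ih hmN.le, integral_kernelPrimitive_mul hε hwm (fun t _ => hderiv t) (hint m hmN.le)
      (hint (m + 1) hm) ((Nat.even_or_odd m).imp_right (hodd m hmN)), Finset.prod_range_succ,
      mul_assoc]

theorem tendsto_integral_kernelPrimitive_mul (hw : 0 ≤ (w - n + 1).re)
    (hv : AEStronglyMeasurable v (volume.restrict (Ioi 0)))
    (hvi : IntegrableOn (fun t => ‖v t‖ * t ^ (-(w - n + 1).re)) (Ioi 0)) :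
    Tendsto (fun ε => ∫ t in Ioi 0, kernelPrimitive w ε n t * v t) (𝓝[>] 0)
      (𝓝 (∫ t in Ioi 0, kernelPrimitive w 0 n t * v t)) := by
  refine tendsto_integral_filter_of_dominated_convergence
    (fun t => 2 * Real.exp (π / 2 * |(w - n + 1).im|) * (‖v t‖ * t ^ (-(w - n + 1).re)))
    ?_ ?_ (hvi.const_mul _) ?_
  · filter_upwards [self_mem_nhdsWithin] with ε hε
    exact (continuous_kernelPrimitive hε).aestronglyMeasurable.mul hv
  · filter_upwards [self_mem_nhdsWithin] with ε hε
    filter_upwards [ae_restrict_mem measurableSet_Ioi] with t ht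
    rw [norm_mul]
    calc ‖kernelPrimitive w ε n t‖ * ‖v t‖
        ≤ 2 * (t ^ (-(w - n + 1).re) * Real.exp (π / 2 * |(w - n + 1).im|)) * ‖v t‖ := by
          gcongr; exact norm_kernelPrimitive_le_rpow (le_of_lt hε) ht hw
      _ = _ := by ring
  · filter_upwards [ae_restrict_mem measurableSet_Ioi] with t ht
    have hcont : ContinuousAt (fun ε => kernelPrimitive w ε n t) 0 :=
      (continuousAt_kernelPrimitive (p := (0, t)) (Or.inr (ne_of_gt ht))).comp
        (f := fun ε : ℝ => (ε, t)) (by fun_prop)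
    exact (hcont.tendsto.mono_left nhdsWithin_le_nhds).mul_const (v t)

end integral

lemma Gamma_add_one_eq_Gamma_mul_prod (w : ℂ) {n : ℕ} (hw : ∀ j < n, w ≠ j) :
    Gamma (w + 1) = Gamma (w + 1 - n) * ∏ j ∈ Finset.range n, (w - j) := by
  induction n with
  | zero => simp
  | succ n ih =>
    rw [ih fun j hj => hw j (by omega), Finset.prod_range_succ,
      show w + 1 - n = (w - n) + 1 by ring, Gamma_add_one _ (sub_ne_zero.2 (hw n n.lt_succ_self))]
    push_cast
    ring_nf

lemma Gamma_mul_prod_mul_sin {w : ℂ} (M : ℕ) (hw : (2 * M : ℝ) < w.re) :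
    Gamma (1 + w) / (2 * π) * (∏ j ∈ Finset.range (2 * M + 1), (-I / (w - j))) *
        (-2 * I * sin (π / 2 * (w - 2 * M))) =
      -sin (π / 2 * w) / π * Gamma (w - 2 * M) := by
  have hwj : ∀ j < 2 * M + 1, w ≠ j := fun j hj hwj => by
    have : (j : ℝ) ≤ 2 * M := by exact_mod_cast Nat.lt_succ_iff.1 hj
    simp [hwj] at hw; linarith
  have hprod : ∏ j ∈ Finset.range (2 * M + 1), (w - j) ≠ 0 :=
    Finset.prod_ne_zero_iff.2 fun j hj => sub_ne_zero.2 (hwj j (Finset.mem_range.1 hj))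
  have hGamma := Gamma_add_one_eq_Gamma_mul_prod w hwj
  have hsin : sin (π / 2 * (w - 2 * M)) = (-1) ^ M * sin (π / 2 * w) := by
    rw [show (π / 2 * (w - 2 * M) : ℂ) = π / 2 * w - M * π by ring]
    exact sin_antiperiodic.sub_nat_mul_eq M
  have hI : (-I) ^ (2 * M + 1) = (-1) ^ M * -I := by rw [pow_succ, pow_mul, neg_sq, I_sq]
  have hM : ((-1 : ℂ) ^ M) ^ 2 = 1 := by rw [← pow_mul, mul_comm, pow_mul]; norm_num
  rw [add_comm 1 w, hGamma, Finset.prod_div_distrib, Finset.prod_const, Finset.card_range, hsin,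
    hI, show w + 1 - ((2 * M + 1 : ℕ) : ℂ) = w - 2 * M by push_cast; ring]
  field_simp
  rw [hM, I_sq]
  ring

theorem stmt_14_general (M : ℕ) (h : ℂ)
    (h1 : (2 * M : ℝ) < (2 * h).re)
    (u : ℝ → ℂ) (hu : ContDiff ℝ (2 * M + 1 : ℕ) u)
    (C c : ℝ) (hc : 0 < c)
    (hbound : ∀ k ≤ 2 * M + 1, ∀ t : ℝ, 0 ≤ t →
      ‖iteratedDeriv k u t‖ ≤ C * Real.exp (-c * t))
    (hodd : ∀ k, Odd k → k < 2 * M → iteratedDeriv k u 0 = 0)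
    (hint : IntegrableOn
      (fun t : ℝ => ‖iteratedDeriv (2 * M + 1) u t‖ * t ^ ((2 * M : ℝ) - (2 * h).re))
      (Set.Ioi (0 : ℝ))) :
    Filter.Tendsto (fun ε : ℝ => ∫ t in Set.Ioi (0 : ℝ), K (2 * h) ε t * u t)
      (nhdsWithin 0 (Set.Ioi 0))
      (nhds (-(Complex.sin ((Real.pi : ℂ) * h)) / (Real.pi : ℂ) *
        Complex.Gamma (2 * h - 2 * (M : ℂ)) *
        ∫ t in Set.Ioi (0 : ℝ),
          iteratedDeriv (2 * M + 1) u t * (t : ℂ) ^ (-(2 * h - 2 * (M : ℂ))))) := by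
  have hq : 2 * h - ((2 * M + 1 : ℕ) : ℂ) + 1 = 2 * h - 2 * M := by push_cast; ring
  have hderiv_int : ∀ k ≤ 2 * M + 1, IntegrableOn (iteratedDeriv k u) (Ioi 0) := fun k hk =>
    integrableOn_Ioi_of_norm_le_exp (hu.continuous_iteratedDeriv k (by exact_mod_cast hk)) hc
      (hbound k hk)
  have hodd' : ∀ k < 2 * M + 1, Odd k → iteratedDeriv k u 0 = 0 := fun k hk hk' =>
    hodd k hk' (by obtain ⟨j, rfl⟩ := hk'; omega)
  have hreduce : (fun ε : ℝ => ∫ t in Ioi 0, K (2 * h) ε t * u t) =ᶠ[𝓝[>] 0] fun ε =>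
      Gamma (1 + 2 * h) / (2 * π) * (∏ j ∈ Finset.range (2 * M + 1), (-I / (2 * h - j))) *
        ∫ t in Ioi 0,
          kernelPrimitive (2 * h) ε (2 * M + 1) t * iteratedDeriv (2 * M + 1) u t := by
    filter_upwards [self_mem_nhdsWithin] with ε hε
    simp only [K_eq_kernelPrimitive_zero, mul_assoc, integral_const_mul]
    rw [integral_kernelPrimitive_mul_eq_prod hε hu (by push_cast; linarith) hderiv_int hodd']
  have hlim := tendsto_integral_kernelPrimitive_mul (w := 2 * h) (n := 2 * M + 1)
    (by rw [hq]; simp at h1 ⊢; linarith)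
    (hu.continuous_iteratedDeriv _ le_rfl).aestronglyMeasurable
    (by convert hint using 3; rw [hq]; simp)
  have hvalue :
      ∫ t in Ioi 0, kernelPrimitive (2 * h) 0 (2 * M + 1) t * iteratedDeriv (2 * M + 1) u t =
      -2 * I * sin (π / 2 * (2 * h - 2 * M)) *
        ∫ t in Ioi 0, iteratedDeriv (2 * M + 1) u t * (t : ℂ) ^ (-(2 * h - 2 * M)) := by
    rw [← integral_const_mul]
    refine setIntegral_congr_fun measurableSet_Ioi fun t ht => ?_
    simp only [kernelPrimitive_zero_of_odd (odd_two_mul_add_one M) ht, hq]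
    ring
  have hconst := Gamma_mul_prod_mul_sin M h1
  rw [show (π / 2 * (2 * h) : ℂ) = π * h by ring] at hconst
  rw [← hconst, mul_assoc _ (-2 * I * _), ← hvalue]
  exact (hlim.const_mul _).congr' hreduce.symm

/-- Let `M ∈ ℕ` and `h ∈ ℂ` with `2M < Re 2h < 2M+2`. Let `u : ℝ → ℂ`
be `(2M+1)`-times continuously differentiable such that all derivatives of order `≤ 2M+1`
decay exponentially on `[0,∞)`, `u^{(k)}(0) = 0` for every odd `k ≤ 2M-1`, and
`t ↦ ‖u^{(2M+1)}(t)‖ t^{2M - Re 2h}` is integrable on `(0,∞)`. Then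
`lim_{ε↓0} ∫_0^∞ K_{2h}^ε(t) u(t) dt
  = -(sin(πh)/π) Γ(2h-2M) ∫_0^∞ u^{(2M+1)}(t) t^{-(2h-2M)} dt`. -/
theorem stmt_14 (M : ℕ) (h : ℂ)
    (h1 : (2 * M : ℝ) < (2 * h).re) (h2 : (2 * h).re < 2 * M + 2)
    (u : ℝ → ℂ) (hu : ContDiff ℝ (2 * M + 1 : ℕ) u)
    (C c : ℝ) (hC : 0 < C) (hc : 0 < c)
    (hbound : ∀ k ≤ 2 * M + 1, ∀ t : ℝ, 0 ≤ t →
      ‖iteratedDeriv k u t‖ ≤ C * Real.exp (-c * t))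
    (hodd : ∀ k, Odd k → k < 2 * M → iteratedDeriv k u 0 = 0)
    (hint : IntegrableOn
      (fun t : ℝ => ‖iteratedDeriv (2 * M + 1) u t‖ * t ^ ((2 * M : ℝ) - (2 * h).re))
      (Set.Ioi (0 : ℝ))) :
    Filter.Tendsto (fun ε : ℝ => ∫ t in Set.Ioi (0 : ℝ), K (2 * h) ε t * u t)
      (nhdsWithin 0 (Set.Ioi 0))
      (nhds (-(Complex.sin ((Real.pi : ℂ) * h)) / (Real.pi : ℂ) *
        Complex.Gamma (2 * h - 2 * (M : ℂ)) *
        ∫ t in Set.Ioi (0 : ℝ),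
          iteratedDeriv (2 * M + 1) u t * (t : ℂ) ^ (-(2 * h - 2 * (M : ℂ))))) :=
  stmt_14_general M h h1 u hu C c hc hbound hodd hint
end

section
/- For every real s > −1/2, every integer k ≥ 1 and every real β > 0, one has ∫_0^1 τ^{s+k−1} · (1−τ)^s · log(β·τ) dτ = (Γ(s+k)·Γ(s+1)/Γ(2s+1+k)) · ( log β + ψ(s+k) − ψ(2s+1+k) ), where Γ is the real Gamma function, ψ(y) = Γ'(y)/Γ(y) is the logarithmic derivative of the real Gamma function (Γ' its derivative), log is the natural logarithm, and the powers are real powers of positive reals; the integrand is absolutely integrable on (0,1). -/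
/-!
With `B(a, b) = ∫₀¹ τ^(a-1) (1-τ)^(b-1) dτ = Γ(a)Γ(b)/Γ(a+b)`, differentiating under the integral
sign in `a` (the factor `log τ` is dominated by a small negative power of `τ`) gives
`∫₀¹ log τ · τ^(a-1) (1-τ)^(b-1) dτ = B(a, b) (ψ(a) - ψ(a+b))`.
Splitting `log (β τ) = log β + log τ` and taking `a = s + k`, `b = s + 1` yields the formula.
-/

open MeasureTheory

/-- `ψ(y) = Γ'(y)/Γ(y)`, the logarithmic derivative of the real Gamma function. -/
noncomputable def digamma (y : ℝ) : ℝ := deriv Real.Gamma y / Real.Gamma y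

open Real Set ProbabilityTheory

lemma ofReal_rpow_mul_one_sub_rpow {x : ℝ} (hx : x ∈ Icc (0 : ℝ) 1) (a b : ℝ) :
    (((x ^ (a - 1) * (1 - x) ^ (b - 1) : ℝ)) : ℂ) =
      (x : ℂ) ^ ((a : ℂ) - 1) * (1 - (x : ℂ)) ^ ((b : ℂ) - 1) := by
  push_cast [Complex.ofReal_mul, Complex.ofReal_cpow hx.1, Complex.ofReal_cpow (sub_nonneg.2 hx.2)]
  rfl

lemma integrableOn_rpow_mul_one_sub_rpow {a b : ℝ} (ha : 0 < a) (hb : 0 < b) :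
    IntegrableOn (fun τ : ℝ ↦ τ ^ (a - 1) * (1 - τ) ^ (b - 1)) (Ioo 0 1) := by
  have h := (intervalIntegrable_iff_integrableOn_Ioo_of_le zero_le_one).1 <|
    Complex.betaIntegral_convergent (u := a) (v := b) (by simpa) (by simpa)
  refine IntegrableOn.congr_fun (Integrable.re h) (fun x hx ↦ ?_) measurableSet_Ioo
  simp [← ofReal_rpow_mul_one_sub_rpow (Ioo_subset_Icc_self hx)]

lemma integral_rpow_mul_one_sub_rpow {a b : ℝ} (ha : 0 < a) (hb : 0 < b) :
    ∫ τ in Ioo (0 : ℝ) 1, τ ^ (a - 1) * (1 - τ) ^ (b - 1) = beta a b := by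
  have h := Complex.betaIntegral_eq_Gamma_mul_div a b (by simpa) (by simpa)
  rw [Complex.betaIntegral, intervalIntegral.integral_congr
    (fun x hx ↦ (ofReal_rpow_mul_one_sub_rpow (uIcc_of_le (zero_le_one' ℝ) ▸ hx) a b).symm),
    intervalIntegral.integral_ofReal, ← Complex.ofReal_add, Complex.Gamma_ofReal,
    Complex.Gamma_ofReal, Complex.Gamma_ofReal] at h
  rw [← integral_Ioc_eq_integral_Ioo, ← intervalIntegral.integral_of_le zero_le_one, beta]
  exact_mod_cast h

lemma abs_log_mul_rpow_le {τ c ε : ℝ} (hτ : τ ∈ Ioc (0 : ℝ) 1) (hε : 0 < ε) :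
    |log τ| * τ ^ c ≤ τ ^ (c - ε) / ε := by
  have h := log_le_rpow_div (inv_nonneg.2 hτ.1.le) hε
  rw [log_inv, inv_rpow hτ.1.le, ← rpow_neg hτ.1.le] at h
  rw [abs_of_nonpos (log_nonpos hτ.1.le hτ.2), sub_eq_neg_add, rpow_add hτ.1, mul_div_right_comm]
  exact mul_le_mul_of_nonneg_right h (rpow_nonneg hτ.1.le c)

lemma norm_log_mul_rpow_mul_one_sub_rpow_le {a₀ a b τ : ℝ} (ha₀ : 0 < a₀) (ha : a₀ / 2 < a)
    (hτ : τ ∈ Ioo (0 : ℝ) 1) :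
    ‖log τ * (τ ^ (a - 1) * (1 - τ) ^ (b - 1))‖ ≤
      4 / a₀ * (τ ^ (a₀ / 4 - 1) * (1 - τ) ^ (b - 1)) := by
  have h1τ : 0 < 1 - τ := sub_pos.2 hτ.2
  -- `|log τ|` costs a factor `τ ^ (-a₀ / 4)`, which `τ ^ (a - 1)` with `a > a₀ / 2` can afford.
  have hlog : |log τ| * τ ^ (a - 1) ≤ 4 / a₀ * τ ^ (a₀ / 4 - 1) :=
    calc |log τ| * τ ^ (a - 1) ≤ τ ^ (a - 1 - a₀ / 4) / (a₀ / 4) :=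
          abs_log_mul_rpow_le (Ioo_subset_Ioc_self hτ) (by positivity)
      _ ≤ τ ^ (a₀ / 4 - 1) / (a₀ / 4) := by
          gcongr ?_ / _
          exact rpow_le_rpow_of_exponent_ge hτ.1 hτ.2.le (by linarith)
      _ = 4 / a₀ * τ ^ (a₀ / 4 - 1) := by field_simp
  rw [norm_mul, norm_mul, norm_eq_abs, norm_of_nonneg (rpow_nonneg hτ.1.le _),
    norm_of_nonneg (rpow_pos_of_pos h1τ _).le, ← mul_assoc, ← mul_assoc]
  exact mul_le_mul_of_nonneg_right hlog (rpow_pos_of_pos h1τ _).le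

lemma integrableOn_log_mul_rpow_mul_one_sub_rpow {a b : ℝ} (ha : 0 < a) (hb : 0 < b) :
    IntegrableOn (fun τ ↦ log τ * (τ ^ (a - 1) * (1 - τ) ^ (b - 1))) (Ioo 0 1) :=
  ((integrableOn_rpow_mul_one_sub_rpow (by positivity) hb).const_mul (4 / a)).mono'
    (by fun_prop)
    ((ae_restrict_iff' measurableSet_Ioo).2 <| .of_forall fun _ hτ ↦
      norm_log_mul_rpow_mul_one_sub_rpow_le ha (half_lt_self ha) hτ)

lemma hasDerivAt_integral_rpow_mul_one_sub_rpow {a b : ℝ} (ha : 0 < a) (hb : 0 < b) :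
    HasDerivAt (fun a ↦ ∫ τ in Ioo (0 : ℝ) 1, τ ^ (a - 1) * (1 - τ) ^ (b - 1))
      (∫ τ in Ioo (0 : ℝ) 1, log τ * (τ ^ (a - 1) * (1 - τ) ^ (b - 1))) a := by
  refine (hasDerivAt_integral_of_dominated_loc_of_deriv_le
    (F := fun a τ ↦ τ ^ (a - 1) * (1 - τ) ^ (b - 1))
    (F' := fun a τ ↦ log τ * (τ ^ (a - 1) * (1 - τ) ^ (b - 1)))
    (Metric.ball_mem_nhds a (half_pos ha))
    (.of_forall fun _ ↦ by fun_prop) (integrableOn_rpow_mul_one_sub_rpow ha hb) (by fun_prop)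
    ((ae_restrict_iff' measurableSet_Ioo).2 <| .of_forall fun τ hτ a' ha' ↦ ?_)
    ((integrableOn_rpow_mul_one_sub_rpow (a := a / 4) (by positivity) hb).const_mul (4 / a))
    ((ae_restrict_iff' measurableSet_Ioo).2 <| .of_forall fun τ hτ a' _ ↦ ?_)).2
  · rw [Metric.mem_ball, dist_comm, dist_eq, abs_lt] at ha'
    exact norm_log_mul_rpow_mul_one_sub_rpow_le ha (by linarith) hτ
  · exact ((((hasDerivAt_id' a').sub_const 1).const_rpow hτ.1).mul_const _).congr_deriv (by ring)

lemma hasDerivAt_Gamma_of_pos {x : ℝ} (hx : 0 < x) : HasDerivAt Gamma (Gamma x * digamma x) x := by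
  rw [digamma, mul_div_cancel₀ _ (Gamma_pos_of_pos hx).ne']
  refine (differentiableAt_Gamma fun m hm ↦ ?_).hasDerivAt
  linarith [hm ▸ hx, m.cast_nonneg (α := ℝ)]

lemma hasDerivAt_beta_left {a b : ℝ} (ha : 0 < a) (hb : 0 < b) :
    HasDerivAt (fun a ↦ beta a b) (beta a b * (digamma a - digamma (a + b))) a := by
  have hab : Gamma (a + b) ≠ 0 := (Gamma_pos_of_pos (add_pos ha hb)).ne'
  refine (((hasDerivAt_Gamma_of_pos ha).mul_const (Gamma b)).div
    ((hasDerivAt_Gamma_of_pos (add_pos ha hb)).comp_add_const a b) hab).congr_deriv ?_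
  rw [beta]
  field_simp

lemma integral_log_mul_rpow_mul_one_sub_rpow {a b : ℝ} (ha : 0 < a) (hb : 0 < b) :
    ∫ τ in Ioo (0 : ℝ) 1, log τ * (τ ^ (a - 1) * (1 - τ) ^ (b - 1)) =
      beta a b * (digamma a - digamma (a + b)) :=
  (hasDerivAt_integral_rpow_mul_one_sub_rpow ha hb).unique <|
    (hasDerivAt_beta_left ha hb).congr_of_eventuallyEq <|
      (eventually_gt_nhds ha).mono fun _ ha' ↦ integral_rpow_mul_one_sub_rpow ha' hb

/-- For every real `s > -1/2`, integer `k ≥ 1` and real `β > 0`,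
`∫_0^1 τ^{s+k-1} (1-τ)^s log(βτ) dτ
  = (Γ(s+k)Γ(s+1)/Γ(2s+1+k)) (log β + ψ(s+k) - ψ(2s+1+k))`. -/
theorem stmt_16 (s : ℝ) (hs : -(1 / 2 : ℝ) < s) (k : ℕ) (hk : 1 ≤ k)
    (β : ℝ) (hβ : 0 < β) :
    (∫ τ in Set.Ioo (0 : ℝ) 1, τ ^ (s + k - 1) * (1 - τ) ^ s * Real.log (β * τ)) =
      Real.Gamma (s + k) * Real.Gamma (s + 1) / Real.Gamma (2 * s + 1 + k) *
        (Real.log β + digamma (s + k) - digamma (2 * s + 1 + k)) := by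
  have hk' : (1 : ℝ) ≤ k := by exact_mod_cast hk
  have ha : 0 < s + k := by linarith
  have hb : 0 < s + 1 := by linarith
  let F := fun τ : ℝ ↦ τ ^ (s + k - 1) * (1 - τ) ^ (s + 1 - 1)
  calc (∫ τ in Ioo (0 : ℝ) 1, τ ^ (s + k - 1) * (1 - τ) ^ s * log (β * τ))
      = ∫ τ in Ioo (0 : ℝ) 1, log β * F τ + log τ * F τ := by
        refine setIntegral_congr_fun measurableSet_Ioo fun τ hτ ↦ ?_
        simp only [F, log_mul hβ.ne' hτ.1.ne', add_sub_cancel_right]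
        ring
    _ = log β * beta (s + k) (s + 1) +
          beta (s + k) (s + 1) * (digamma (s + k) - digamma (s + k + (s + 1))) := by
        rw [integral_add ((integrableOn_rpow_mul_one_sub_rpow ha hb).const_mul _)
          (integrableOn_log_mul_rpow_mul_one_sub_rpow ha hb), integral_const_mul,
          integral_rpow_mul_one_sub_rpow ha hb, integral_log_mul_rpow_mul_one_sub_rpow ha hb]
    _ = _ := by
        rw [beta, show s + k + (s + 1) = 2 * s + 1 + k by ring]
        ring
end
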